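/- arXiv:1611.00256 — 10 statements merged into one kernel-verified Lean document; each statement's English description precedes it below -/
import Mathlib

section
/- For every natural number n, p_a(n) = Σ_{m=0}^{r−1} d_m(n) n^m, where d_m(n) := (1/(r−1)!) · Σ over all tuples (j_1,…,j_r) of integers with 0 ≤ j_k ≤ D/a_k − 1 for all k and a_1j_1+⋯+a_rj_r ≡ n (mod D), of Σ_{k=m}^{r−1} c(r, k+1) (−1)^{k−m} binom(k, m) D^{−k} (a_1j_1+⋯+a_rj_r)^{k−m}. Moreover each function d_m is periodic of period D, i.e. d_m(n+D) = d_m(n) for all n. -/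
open Finset

lemma auxSigmaCard {ι : Type*} [Fintype ι] (T : ι → Type*) [∀ i, Finite (T i)] :
    Nat.card (Σ i, T i) = ∑ i, Nat.card (T i) := by
  haveI : ∀ i, Fintype (T i) := fun i => Fintype.ofFinite _
  simp [Nat.card_eq_fintype_card, Fintype.card_sigma]

noncomputable def auxCountEquiv (r : ℕ) : Multiset (Fin r) ≃ (Fin r → ℕ) :=
  Multiset.toFinsupp.toEquiv.trans Finsupp.equivFunOnFinite

lemma auxCountEquiv_apply (r : ℕ) (m : Multiset (Fin r)) (i : Fin r) :
    auxCountEquiv r m i = m.count i :=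
  Multiset.toFinsupp_apply m i

lemma auxStars (r t : ℕ) :
    Nat.card {y : Fin r → ℕ // ∑ i, y i = t} = Nat.multichoose r t := by
  set e := auxCountEquiv r with he
  have hcard : ∀ m : Multiset (Fin r), Multiset.card m = ∑ i, e m i := by
    intro m
    have h1 : ∀ i, e m i = m.count i := fun i => auxCountEquiv_apply r m i
    simp only [h1]
    exact (Multiset.sum_count_eq_card (fun a _ => Finset.mem_univ a)).symm
  have E : Sym (Fin r) t ≃ {y : Fin r → ℕ // ∑ i, y i = t} :=
    Equiv.subtypeEquiv e (fun m => by rw [← hcard m])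
  rw [← Nat.card_congr E, Nat.card_eq_fintype_card, Sym.card_sym_eq_multichoose,
    Fintype.card_fin]

lemma auxProd (m : ℕ) (x : ℚ) :
    (ascPochhammer ℚ m).eval x = ∏ i ∈ Finset.range m, (x + i) := by
  induction m with
  | zero => simp
  | succ m ih => rw [ascPochhammer_succ_eval, ih, Finset.prod_range_succ]

lemma auxB (r : ℕ) (hr : 1 ≤ r) (x : ℚ) :
    ∑ k ∈ Finset.range r, ((ascPochhammer ℕ r).coeff (k + 1) : ℚ) * x ^ k
      = (ascPochhammer ℚ (r - 1)).eval (x + 1) := by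
  obtain ⟨r', rfl⟩ : ∃ r', r = r' + 1 := ⟨r - 1, by omega⟩
  simp only [Nat.add_sub_cancel]
  have hcoeff : ∀ k, ((ascPochhammer ℕ (r' + 1)).coeff (k + 1) : ℚ)
      = ((ascPochhammer ℚ r').comp (Polynomial.X + 1)).coeff k := by
    intro k
    rw [ascPochhammer_succ_left, Polynomial.coeff_X_mul]
    have : ((ascPochhammer ℕ r').comp (Polynomial.X + 1)).map (Nat.castRingHom ℚ)
        = (ascPochhammer ℚ r').comp (Polynomial.X + 1) := by
      rw [Polynomial.map_comp, ascPochhammer_map]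
      simp
    rw [← this, Polynomial.coeff_map]
    simp
  simp only [hcoeff]
  rw [← Polynomial.eval_eq_sum_range' (n := r' + 1), Polynomial.eval_comp]
  · simp
  · apply lt_of_le_of_lt (Polynomial.natDegree_comp_le)
    have h1 : (Polynomial.X + 1 : Polynomial ℚ).natDegree = 1 := by
      simpa using Polynomial.natDegree_X_add_C (1 : ℚ)
    rw [h1, ascPochhammer_natDegree, mul_one]
    omega

/-- The restricted partition function: the number of solutions `x : Fin r → ℕ`
of `∑ i, a i * x i = n`. -/
noncomputable def restrictedPartition {r : ℕ} (a : Fin r → ℕ) (n : ℕ) : ℕ :=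
  Nat.card {x : Fin r → ℕ // ∑ i, a i * x i = n}

lemma auxCount (r : ℕ) (a : Fin r → ℕ) (ha : ∀ i, 0 < a i) (D : ℕ) (hD : 0 < D)
    (hdvd : ∀ i, a i ∣ D) (n : ℕ) :
    restrictedPartition a n =
      ∑ j ∈ Finset.univ.filter (fun j : ∀ k : Fin r, Fin (D / a k) =>
          (∑ k, a k * (j k : ℕ)) % D = n % D),
        (if (∑ k, a k * (j k : ℕ)) ≤ n
          then Nat.multichoose r ((n - ∑ k, a k * (j k : ℕ)) / D) else 0) := by
  classical
  have hq : ∀ k, 0 < D / a k := fun k => Nat.div_pos (Nat.le_of_dvd hD (hdvd k)) (ha k)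
  -- the div/mod equiv
  let Φ : (Fin r → ℕ) ≃ ((∀ k, Fin (D / a k)) × (Fin r → ℕ)) :=
    { toFun := fun x => (fun k => ⟨x k % (D / a k), Nat.mod_lt _ (hq k)⟩,
        fun k => x k / (D / a k))
      invFun := fun p => fun k => (p.1 k : ℕ) + (D / a k) * p.2 k
      left_inv := fun x => by
        funext k
        exact Nat.mod_add_div (x k) (D / a k)
      right_inv := fun p => by
        ext k
        · simp [Nat.add_mul_mod_self_left, Nat.mod_eq_of_lt (p.1 k).2]
        · simp [Nat.add_mul_div_left _ _ (hq k), Nat.div_eq_of_lt (p.1 k).2] }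
  have hsym : ∀ p : (∀ k, Fin (D / a k)) × (Fin r → ℕ),
      ∑ k, a k * Φ.symm p k = (∑ k, a k * (p.1 k : ℕ)) + D * ∑ k, p.2 k := by
    intro p
    have : ∀ k, a k * Φ.symm p k = a k * (p.1 k : ℕ) + D * p.2 k := by
      intro k
      show a k * ((p.1 k : ℕ) + (D / a k) * p.2 k) = _
      rw [mul_add, ← mul_assoc, Nat.mul_div_cancel' (hdvd k)]
    rw [Finset.sum_congr rfl (fun k _ => this k), Finset.sum_add_distrib, ← Finset.mul_sum]
  let T : (∀ k, Fin (D / a k)) → Type := fun j =>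
    {y : Fin r → ℕ // (∑ k, a k * (j k : ℕ)) + D * ∑ k, y k = n}
  have hTfin : ∀ j, Finite (T j) := by
    intro j
    apply Finite.of_injective (fun y : T j => fun i : Fin r => (⟨y.1 i, by
      have h1 : y.1 i ≤ ∑ k, y.1 k :=
        Finset.single_le_sum (f := y.1) (fun k _ => Nat.zero_le _) (Finset.mem_univ i)
      have h2 : ∑ k, y.1 k ≤ D * ∑ k, y.1 k := Nat.le_mul_of_pos_left _ hD
      have h3 := y.2
      omega⟩ : Fin (n + 1)))
    intro y z hyz
    ext k
    have := congrFun hyz k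
    simpa using congrArg Fin.val this
  have E1 : {x : Fin r → ℕ // ∑ i, a i * x i = n} ≃
      {p : (∀ k, Fin (D / a k)) × (Fin r → ℕ) //
        (∑ k, a k * (p.1 k : ℕ)) + D * ∑ k, p.2 k = n} := by
    apply Equiv.subtypeEquiv Φ
    intro x
    conv_lhs => rw [← Equiv.symm_apply_apply Φ x]
    rw [hsym (Φ x)]
  have E2 : {p : (∀ k, Fin (D / a k)) × (Fin r → ℕ) //
        (∑ k, a k * (p.1 k : ℕ)) + D * ∑ k, p.2 k = n} ≃ Σ j, T j :=
    { toFun := fun p => ⟨p.1.1, p.1.2, p.2⟩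
      invFun := fun q => ⟨(q.1, q.2.1), q.2.2⟩
      left_inv := fun ⟨⟨j, y⟩, h⟩ => rfl
      right_inv := fun ⟨j, y, h⟩ => rfl }
  have hmain : restrictedPartition a n = ∑ j, Nat.card (T j) := by
    rw [restrictedPartition, Nat.card_congr (E1.trans E2), auxSigmaCard]
  rw [hmain, Finset.sum_filter]
  apply Finset.sum_congr rfl
  intro j _
  set s := ∑ k, a k * (j k : ℕ) with hs
  by_cases hcong : s % D = n % D
  · by_cases hle : s ≤ n
    · have hdvd2 : D ∣ n - s := (Nat.modEq_iff_dvd' hle).mp hcong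
      have ht : D * ((n - s) / D) = n - s := Nat.mul_div_cancel' hdvd2
      have hiff : ∀ y : Fin r → ℕ, (s + D * ∑ k, y k = n) ↔ (∑ k, y k = (n - s) / D) := by
        intro y
        constructor
        · intro h
          apply Nat.eq_of_mul_eq_mul_left hD
          omega
        · intro h
          rw [h]
          omega
      have : Nat.card (T j) = Nat.multichoose r ((n - s) / D) := by
        rw [Nat.card_congr (Equiv.subtypeEquivRight hiff), auxStars]
      simp [this, hcong, hle]
    · have : IsEmpty (T j) := by
        constructor
        intro y
        have := y.2
        omega
      simp [Nat.card_of_isEmpty, hcong, hle]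
  · have : IsEmpty (T j) := by
      constructor
      intro y
      have h := y.2
      have : (s + D * ∑ k, y.1 k) % D = s % D := Nat.add_mul_mod_self_left s D _
      rw [h] at this
      exact hcong this.symm
    simp [Nat.card_of_isEmpty, hcong]

lemma auxPer (r : ℕ) (hr : 1 ≤ r) (D : ℕ) (hD : 0 < D) (n s : ℕ)
    (hcong : s % D = n % D) (hslt : s < r * D) :
    (if s ≤ n then (Nat.multichoose r ((n - s) / D) : ℚ) else 0) =
      (1 / (r - 1).factorial : ℚ) *
        ∑ k ∈ Finset.range r, ((ascPochhammer ℕ r).coeff (k + 1) : ℚ) *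
          (((n : ℚ) - s) / D) ^ k := by
  rw [auxB r hr]
  have hF : ((r - 1).factorial : ℚ) ≠ 0 := Nat.cast_ne_zero.mpr (Nat.factorial_ne_zero _)
  have hDQ : (D : ℚ) ≠ 0 := Nat.cast_ne_zero.mpr hD.ne'
  by_cases hle : s ≤ n
  · rw [if_pos hle]
    have hdvd2 : D ∣ n - s := (Nat.modEq_iff_dvd' hle).mp hcong
    obtain ⟨t, ht⟩ : ∃ t, n - s = D * t := hdvd2
    have htdef : (n - s) / D = t := by rw [ht, Nat.mul_div_cancel_left _ hD]
    rw [htdef]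
    have hx : ((n : ℚ) - s) / D = t := by
      have : (n : ℚ) - s = D * t := by
        have : ((n - s : ℕ) : ℚ) = (n : ℚ) - s := by
          push_cast [Nat.cast_sub hle]; ring
        rw [← this, ht]; push_cast; ring
      rw [this]; field_simp
    rw [hx]
    have hx2 : (t : ℚ) + 1 = ((t + 1 : ℕ) : ℚ) := by push_cast; ring
    rw [hx2, ← Nat.cast_ascFactorial]
    rw [Nat.ascFactorial_eq_factorial_mul_choose]
    have hch : Nat.multichoose r t = (t + (r - 1)).choose (r - 1) := by
      rw [Nat.multichoose_eq]
      have h1 : r + t - 1 = t + (r - 1) := by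
        rw [Nat.add_comm r t, Nat.add_sub_assoc hr]
      rw [h1, ← Nat.choose_symm (Nat.le_add_right t (r - 1)), Nat.add_sub_cancel_left]
    rw [hch]
    push_cast
    field_simp
  · rw [if_neg hle]
    push_neg at hle
    have hcong' : n % D = s % D := hcong.symm
    have hdvd2 : D ∣ s - n := (Nat.modEq_iff_dvd' hle.le).mp hcong'
    obtain ⟨u, hu⟩ : ∃ u, s - n = D * u := hdvd2
    have hu1 : 1 ≤ u := by
      rcases Nat.eq_zero_or_pos u with h | h
      · rw [h, Nat.mul_zero] at hu; omega
      · exact h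
    have hu2 : u ≤ r - 1 := by
      have : D * u < r * D := by omega
      have : u < r := by
        by_contra hc
        push_neg at hc
        have : r * D ≤ D * u := by
          calc r * D = D * r := by ring
          _ ≤ D * u := Nat.mul_le_mul_left D hc
        omega
      omega
    have hx : ((n : ℚ) - s) / D = -(u : ℚ) := by
      have h1 : (s : ℚ) - n = D * u := by
        have : ((s - n : ℕ) : ℚ) = (s : ℚ) - n := by
          push_cast [Nat.cast_sub hle.le]; ring
        rw [← this, hu]; push_cast; ring
      have h2 : (n : ℚ) - s = -(D * u) := by rw [← h1]; ring
      rw [h2]; field_simp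
    rw [hx, auxProd]
    have hzero : ∏ i ∈ Finset.range (r - 1), (-(u : ℚ) + 1 + i) = 0 := by
      apply Finset.prod_eq_zero (i := u - 1) (Finset.mem_range.mpr (by omega))
      have : ((u - 1 : ℕ) : ℚ) = (u : ℚ) - 1 := by
        push_cast [Nat.cast_sub hu1]; ring
      rw [this]; ring
    rw [hzero, mul_zero]

lemma auxSwap (r : ℕ) (hr : 1 ≤ r) (D : ℚ) (hD : D ≠ 0) (x s : ℚ) :
    ∑ m ∈ Finset.range r, (∑ k ∈ Finset.Icc m (r - 1),
        ((ascPochhammer ℕ r).coeff (k + 1) : ℚ) * (-1) ^ (k - m) *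
          (k.choose m : ℚ) * (D ^ k)⁻¹ * s ^ (k - m)) * x ^ m
      = ∑ k ∈ Finset.range r, ((ascPochhammer ℕ r).coeff (k + 1) : ℚ) *
          ((x - s) / D) ^ k := by
  have hIcc : ∀ m, Finset.Icc m (r - 1) = Finset.Ico m r := by
    intro m
    rw [← Finset.Ico_add_one_right_eq_Icc]
    congr 1
    omega
  simp only [Finset.sum_mul, hIcc]
  rw [Finset.range_eq_Ico, Finset.sum_Ico_Ico_comm 0 r]
  apply Finset.sum_congr rfl
  intro k _
  have h1 : ((x - s) / D) ^ k = (D ^ k)⁻¹ * (x + -s) ^ k := by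
    rw [div_pow, sub_eq_add_neg]
    ring
  rw [h1, add_pow, Finset.mul_sum, Finset.mul_sum]
  rw [Nat.Ico_zero_eq_range]
  apply Finset.sum_congr rfl
  intro m _
  rw [neg_pow]
  ring

/-- `p_a(n) = ∑_{m=0}^{r-1} d_m(n) n^m` with the explicit formula for `d_m`
(using unsigned Stirling numbers of the first kind, i.e. coefficients of the
ascending Pochhammer polynomial `x(x+1)⋯(x+r-1)`), and each `d_m` is periodic
of period `D`. -/
theorem stmt0 (r : ℕ) (hr : 1 ≤ r) (a : Fin r → ℕ) (ha : ∀ i, 0 < a i)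
    (D : ℕ) (hD : 0 < D) (hdvd : ∀ i, a i ∣ D)
    (d : ℕ → ℕ → ℚ)
    (hd : ∀ m n : ℕ, d m n =
      (1 / (r - 1).factorial : ℚ) *
        ∑ j ∈ Finset.univ.filter
            (fun j : ∀ k : Fin r, Fin (D / a k) =>
              (∑ k, a k * (j k : ℕ)) % D = n % D),
          ∑ k ∈ Finset.Icc m (r - 1),
            ((ascPochhammer ℕ r).coeff (k + 1) : ℚ) * (-1) ^ (k - m) *
              (k.choose m : ℚ) * ((D : ℚ) ^ k)⁻¹ *
              ((∑ i, a i * (j i : ℕ) : ℕ) : ℚ) ^ (k - m)) :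
    (∀ n : ℕ, (restrictedPartition a n : ℚ) =
        ∑ m ∈ Finset.range r, d m n * (n : ℚ) ^ m) ∧
    (∀ m, m < r → ∀ n : ℕ, d m (n + D) = d m n) := by
  have hslt : ∀ j : ∀ k : Fin r, Fin (D / a k), (∑ k, a k * (j k : ℕ)) < r * D := by
    intro j
    have h1 : ∀ k : Fin r, a k * (j k : ℕ) < D := by
      intro k
      have h2 : (j k : ℕ) + 1 ≤ D / a k := (j k).2
      have h3 : a k * ((j k : ℕ) + 1) ≤ a k * (D / a k) := Nat.mul_le_mul_left _ h2
      rw [Nat.mul_div_cancel' (hdvd k)] at h3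
      rw [Nat.mul_add, Nat.mul_one] at h3
      have := ha k
      omega
    calc (∑ k, a k * (j k : ℕ)) < ∑ _k : Fin r, D := by
          apply Finset.sum_lt_sum_of_nonempty
          · exact Finset.univ_nonempty_iff.mpr ⟨⟨0, hr⟩⟩
          · exact fun k _ => h1 k
      _ = r * D := by simp [Finset.sum_const, Finset.card_univ, mul_comm]
  constructor
  · intro n
    rw [auxCount r a ha D hD hdvd n, Nat.cast_sum]
    have hterm : ∀ j ∈ Finset.univ.filter (fun j : ∀ k : Fin r, Fin (D / a k) =>
          (∑ k, a k * (j k : ℕ)) % D = n % D),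
        ((if (∑ k, a k * (j k : ℕ)) ≤ n
            then Nat.multichoose r ((n - ∑ k, a k * (j k : ℕ)) / D) else 0 : ℕ) : ℚ)
          = (1 / (r - 1).factorial : ℚ) *
              ∑ k ∈ Finset.range r, ((ascPochhammer ℕ r).coeff (k + 1) : ℚ) *
                (((n : ℚ) - (∑ i, a i * (j i : ℕ) : ℕ)) / D) ^ k := by
      intro j hj
      rw [Nat.cast_ite, Nat.cast_zero]
      exact auxPer r hr D hD n _ (Finset.mem_filter.mp hj).2 (hslt j)
    rw [Finset.sum_congr rfl hterm]
    simp only [hd]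
    -- RHS: ∑ m, (c * ∑ j, A j m) * n ^ m
    have step1 : ∑ m ∈ Finset.range r,
        ((1 / (r - 1).factorial : ℚ) *
          ∑ j ∈ Finset.univ.filter (fun j : ∀ k : Fin r, Fin (D / a k) =>
              (∑ k, a k * (j k : ℕ)) % D = n % D),
            ∑ k ∈ Finset.Icc m (r - 1),
              ((ascPochhammer ℕ r).coeff (k + 1) : ℚ) * (-1) ^ (k - m) *
                (k.choose m : ℚ) * ((D : ℚ) ^ k)⁻¹ *
                ((∑ i, a i * (j i : ℕ) : ℕ) : ℚ) ^ (k - m)) * (n : ℚ) ^ m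
        = ∑ j ∈ Finset.univ.filter (fun j : ∀ k : Fin r, Fin (D / a k) =>
              (∑ k, a k * (j k : ℕ)) % D = n % D),
            (1 / (r - 1).factorial : ℚ) *
              ∑ m ∈ Finset.range r,
                (∑ k ∈ Finset.Icc m (r - 1),
                  ((ascPochhammer ℕ r).coeff (k + 1) : ℚ) * (-1) ^ (k - m) *
                    (k.choose m : ℚ) * ((D : ℚ) ^ k)⁻¹ *
                    ((∑ i, a i * (j i : ℕ) : ℕ) : ℚ) ^ (k - m)) * (n : ℚ) ^ m := by
      simp only [Finset.mul_sum, Finset.sum_mul]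
      rw [Finset.sum_comm]
      apply Finset.sum_congr rfl
      intro j _
      apply Finset.sum_congr rfl
      intro m _
      apply Finset.sum_congr rfl
      intro k _
      ring
    rw [step1]
    apply Finset.sum_congr rfl
    intro j hj
    congr 1
    exact (auxSwap r hr (D : ℚ) (Nat.cast_ne_zero.mpr hD.ne') (n : ℚ)
      ((∑ i, a i * (j i : ℕ) : ℕ) : ℚ)).symm
  · intro m _ n
    rw [hd, hd]
    have : (n + D) % D = n % D := Nat.add_mod_right n D
    rw [this]
end

section
/- For a natural number n, p_a(n) = 0 if and only if n < a_1j_1 + ⋯ + a_rj_r for every tuple (j_1,…,j_r) of integers with 0 ≤ j_k ≤ D/a_k − 1 for all k and a_1j_1+⋯+a_rj_r ≡ n (mod D). -/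
theorem stmt2 (r : ℕ) (hr : 1 ≤ r) (a : Fin r → ℕ) (ha : ∀ i, 0 < a i)
    (D : ℕ) (hD : 0 < D) (hdvd : ∀ i, a i ∣ D) (n : ℕ) :
    restrictedPartition a n = 0 ↔
      ∀ j : Fin r → ℕ, (∀ k, j k ≤ D / a k - 1) →
        (∑ k, a k * j k) % D = n % D → n < ∑ k, a k * j k := by
  have hfin : Finite {x : Fin r → ℕ // ∑ i, a i * x i = n} := by
    apply Finite.of_injective (β := Fin r → Fin (n + 1))
      (fun (x : {x : Fin r → ℕ // ∑ i, a i * x i = n}) => fun i => ⟨x.1 i, by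
        have h1 : x.1 i ≤ a i * x.1 i := Nat.le_mul_of_pos_left _ (ha i)
        have h2 : a i * x.1 i ≤ ∑ k, a k * x.1 k :=
          Finset.single_le_sum (f := fun k => a k * x.1 k) (fun k _ => Nat.zero_le _)
            (Finset.mem_univ i)
        omega
        ⟩)
    intro x y h
    ext i
    exact congrArg Fin.val (congrFun h i)
  constructor
  · intro h0 j hj hmod
    by_contra hlt
    push_neg at hlt
    have hmeq : (∑ k, a k * j k) ≡ n [MOD D] := hmod
    obtain ⟨m, hm⟩ := (Nat.modEq_iff_dvd' hlt).mp hmeq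
    set i0 : Fin r := ⟨0, hr⟩
    set x : Fin r → ℕ := Function.update j i0 (j i0 + m * (D / a i0)) with hxdef
    have hsum : ∑ k, a k * x k = n := by
      have h1 : ∑ k, a k * x k = ∑ k, a k * j k + a i0 * (m * (D / a i0)) := by
        have : ∀ k ∈ Finset.univ \ {i0}, a k * x k = a k * j k := by
          intro k hk
          simp only [Finset.mem_sdiff, Finset.mem_singleton] at hk
          rw [hxdef, Function.update_of_ne hk.2]
        rw [← Finset.sum_sdiff (Finset.subset_univ {i0}),
            ← Finset.sum_sdiff (Finset.subset_univ {i0}) (f := fun k => a k * j k),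
            Finset.sum_congr rfl this]
        simp [hxdef, Nat.mul_add]
        ring
      have h2 : a i0 * (m * (D / a i0)) = D * m := by
        rw [← Nat.mul_assoc, Nat.mul_comm (a i0) m, Nat.mul_assoc,
          Nat.mul_div_cancel' (hdvd i0), Nat.mul_comm m D]
      omega
    have : restrictedPartition a n ≠ 0 := by
      have : Nat.card {x : Fin r → ℕ // ∑ i, a i * x i = n} ≠ 0 := by
        have : Nonempty {x : Fin r → ℕ // ∑ i, a i * x i = n} := ⟨⟨x, hsum⟩⟩
        exact Nat.card_ne_zero.mpr ⟨this, hfin⟩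
      exact this
    exact this h0
  · intro h
    have : IsEmpty {x : Fin r → ℕ // ∑ i, a i * x i = n} := by
      constructor
      rintro ⟨x, hx⟩
      set j : Fin r → ℕ := fun k => x k % (D / a k) with hjdef
      have hdpos : ∀ k, 0 < D / a k := fun k =>
        Nat.div_pos (Nat.le_of_dvd hD (hdvd k)) (ha k)
      have hj : ∀ k, j k ≤ D / a k - 1 := fun k =>
        Nat.le_sub_one_of_lt (Nat.mod_lt _ (hdpos k))
      have hle : ∑ k, a k * j k ≤ n := by
        rw [← hx]
        exact Finset.sum_le_sum fun k _ =>
          Nat.mul_le_mul_left _ (Nat.mod_le _ _)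
      have hmod : (∑ k, a k * j k) % D = n % D := by
        rw [← hx, Finset.sum_nat_mod, Finset.sum_nat_mod (f := fun k => a k * x k)]
        congr 1
        apply Finset.sum_congr rfl
        intro k _
        have : a k * (x k % (D / a k)) ≡ a k * x k [MOD a k * (D / a k)] :=
          (Nat.mod_modEq (x k) (D / a k)).mul_left' (a k)
        rw [Nat.mul_div_cancel' (hdvd k)] at this
        exact this
      exact absurd hle (not_le.mpr (h j hj hmod))
    unfold restrictedPartition
    simp [Nat.card_eq_zero, this]
end

section
/- For every natural number n, f_a(n) = Σ_{j=0}^{⌊n/D⌋} (−1)^j binom(r, j) p_a(n − jD). -/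
/-- `f_a(n)`: the number of tuples `j` with `0 ≤ j k ≤ D / a k - 1` for all `k`
and `∑ k, a k * j k = n`. -/
noncomputable def fa {r : ℕ} (a : Fin r → ℕ) (D n : ℕ) : ℕ :=
  Nat.card {j : Fin r → ℕ // (∀ k, j k ≤ D / a k - 1) ∧ ∑ k, a k * j k = n}

open Finset

/-- The ambient finset of solutions. -/
def Omega {r : ℕ} (a : Fin r → ℕ) (n : ℕ) : Finset (Fin r → ℕ) :=
  (Fintype.piFinset fun _ => Finset.range (n + 1)).filter fun x => ∑ i, a i * x i = n

lemma mem_Omega {r : ℕ} {a : Fin r → ℕ} (ha : ∀ i, 0 < a i) {n : ℕ} {x : Fin r → ℕ} :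
    x ∈ Omega a n ↔ ∑ i, a i * x i = n := by
  simp only [Omega, mem_filter, Fintype.mem_piFinset, mem_range, Nat.lt_succ_iff]
  constructor
  · exact fun h => h.2
  · intro h
    refine ⟨fun k => ?_, h⟩
    calc x k ≤ a k * x k := Nat.le_mul_of_pos_left _ (ha k)
      _ ≤ ∑ i, a i * x i :=
        Finset.single_le_sum (f := fun i => a i * x i) (fun i _ => Nat.zero_le _) (mem_univ k)
      _ = n := h

lemma restrictedPartition_eq {r : ℕ} (a : Fin r → ℕ) (ha : ∀ i, 0 < a i) (n : ℕ) :
    restrictedPartition a n = (Omega a n).card := by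
  rw [restrictedPartition, ← Nat.card_eq_finsetCard]
  exact Nat.card_congr (Equiv.subtypeEquivRight fun x => (mem_Omega ha).symm)

lemma fa_eq {r : ℕ} (a : Fin r → ℕ) (ha : ∀ i, 0 < a i) (D : ℕ) (hD : 0 < D)
    (hdvd : ∀ i, a i ∣ D) (n : ℕ) :
    fa a D n = ((Omega a n).filter fun x => ∀ k, x k < D / a k).card := by
  rw [fa, ← Nat.card_eq_finsetCard]
  refine Nat.card_congr (Equiv.subtypeEquivRight fun x => ?_)
  have hDa : ∀ k : Fin r, 1 ≤ D / a k := fun k =>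
    (Nat.one_le_div_iff (ha k)).2 (Nat.le_of_dvd hD (hdvd k))
  simp only [mem_filter, mem_Omega ha]
  constructor
  · rintro ⟨h1, h2⟩
    exact ⟨h2, fun k => by have := h1 k; have := hDa k; omega⟩
  · rintro ⟨h2, h1⟩
    exact ⟨fun k => by have := h1 k; have := hDa k; omega, h2⟩

lemma count_S {r : ℕ} (a : Fin r → ℕ) (ha : ∀ i, 0 < a i) (D : ℕ) (hD : 0 < D)
    (hdvd : ∀ i, a i ∣ D) (n : ℕ) (S : Finset (Fin r)) :
    ((Omega a n).filter fun x => ∀ k ∈ S, D / a k ≤ x k).card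
      = if S.card * D ≤ n then restrictedPartition a (n - S.card * D) else 0 := by
  classical
  set c : Fin r → ℕ := fun k => if k ∈ S then D / a k else 0 with hc
  have hac : ∀ k, a k * c k = if k ∈ S then D else 0 := by
    intro k
    by_cases hk : k ∈ S <;> simp [hc, hk, Nat.mul_div_cancel' (hdvd k)]
  have hsc : ∑ k, a k * c k = S.card * D := by
    simp only [hac]
    rw [Finset.sum_ite_mem, Finset.univ_inter, Finset.sum_const, smul_eq_mul]
  by_cases h : S.card * D ≤ n
  · rw [if_pos h, restrictedPartition_eq a ha]
    apply Finset.card_bij' (fun x _ => fun k => x k - c k) (fun y _ => fun k => y k + c k)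
    · intro x hx
      simp only [mem_filter, mem_Omega ha] at hx
      obtain ⟨hxs, hxS⟩ := hx
      have hcx : ∀ k, c k ≤ x k := by
        intro k
        by_cases hk : k ∈ S
        · simpa [hc, hk] using hxS k hk
        · simp [hc, hk]
      rw [mem_Omega ha]
      have key : ∑ k, a k * (x k - c k) + ∑ k, a k * c k = ∑ k, a k * x k := by
        rw [← Finset.sum_add_distrib]
        exact Finset.sum_congr rfl fun k _ => by
          rw [← Nat.mul_add, Nat.sub_add_cancel (hcx k)]
      omega
    · intro y hy
      rw [mem_Omega ha] at hy
      simp only [mem_filter, mem_Omega ha]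
      constructor
      · have : ∑ k, a k * (y k + c k) = ∑ k, a k * y k + ∑ k, a k * c k := by
          rw [← Finset.sum_add_distrib]
          exact Finset.sum_congr rfl fun k _ => Nat.mul_add _ _ _
        omega
      · intro k hk
        simp [hc, hk]
    · intro x hx
      simp only [mem_filter, mem_Omega ha] at hx
      funext k
      have hcx : c k ≤ x k := by
        by_cases hk : k ∈ S
        · simpa [hc, hk] using hx.2 k hk
        · simp [hc, hk]
      exact Nat.sub_add_cancel hcx
    · intro y _
      funext k
      simp
  · rw [if_neg h]
    rw [Finset.card_eq_zero, Finset.eq_empty_iff_forall_notMem]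
    intro x hx
    simp only [mem_filter, mem_Omega ha] at hx
    obtain ⟨hxs, hxS⟩ := hx
    have : S.card * D ≤ ∑ k, a k * x k := by
      calc S.card * D = ∑ k, a k * c k := hsc.symm
        _ ≤ ∑ k, a k * x k := Finset.sum_le_sum fun k _ => by
            by_cases hk : k ∈ S
            · have hck : c k = D / a k := by simp [hc, hk]
              exact Nat.mul_le_mul_left _ (hck ▸ hxS k hk)
            · simp [hc, hk]
    omega

theorem stmt4 (r : ℕ) (hr : 1 ≤ r) (a : Fin r → ℕ) (ha : ∀ i, 0 < a i)
    (D : ℕ) (hD : 0 < D) (hdvd : ∀ i, a i ∣ D) :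
    ∀ n : ℕ, (fa a D n : ℤ) =
      ∑ j ∈ Finset.range (n / D + 1),
        (-1) ^ j * (r.choose j : ℤ) * (restrictedPartition a (n - j * D) : ℤ) := by
  classical
  intro n
  -- Step 1: f_a(n) as a sum of products of indicators
  have step1 : (fa a D n : ℤ) =
      ∑ x ∈ Omega a n, ∏ k, ((if D / a k ≤ x k then (-1 : ℤ) else 0) + 1) := by
    rw [fa_eq a ha D hD hdvd n, Finset.card_filter]
    push_cast
    refine Finset.sum_congr rfl fun x _ => ?_
    by_cases hx : ∀ k, x k < D / a k
    · rw [if_pos hx]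
      exact (Finset.prod_eq_one fun k _ => by rw [if_neg (not_le.2 (hx k))]; ring).symm
    · rw [if_neg hx]
      push_neg at hx
      obtain ⟨k, hk⟩ := hx
      symm
      apply Finset.prod_eq_zero (Finset.mem_univ k)
      rw [if_pos hk]; ring
  -- Step 2: expand the product over subsets
  have step2 : (fa a D n : ℤ) =
      ∑ S ∈ (Finset.univ : Finset (Fin r)).powerset,
        (-1 : ℤ) ^ S.card * ((Omega a n).filter fun x => ∀ k ∈ S, D / a k ≤ x k).card := by
    rw [step1]
    simp only [Finset.prod_add]
    rw [Finset.sum_comm]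
    refine Finset.sum_congr rfl fun S hS => ?_
    have : ∀ x ∈ Omega a n,
        (∏ k ∈ S, if D / a k ≤ x k then (-1 : ℤ) else 0) * ∏ k ∈ Finset.univ \ S, (1 : ℤ)
          = (-1 : ℤ) ^ S.card * (if ∀ k ∈ S, D / a k ≤ x k then (1 : ℤ) else 0) := by
      intro x _
      rw [Finset.prod_const_one, mul_one]
      by_cases hx : ∀ k ∈ S, D / a k ≤ x k
      · rw [if_pos hx, mul_one]
        rw [Finset.prod_congr rfl fun k hk => if_pos (hx k hk), Finset.prod_const]
      · rw [if_neg hx, mul_zero]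
        push_neg at hx
        obtain ⟨k, hk, hk'⟩ := hx
        exact Finset.prod_eq_zero hk (if_neg (not_le.2 hk'))
    rw [Finset.sum_congr rfl this, ← Finset.mul_sum]
    congr 1
    rw [Finset.card_filter]
    push_cast
    rfl
  rw [step2]
  -- Step 3: evaluate each subset's count
  have step3 : ∀ S ∈ (Finset.univ : Finset (Fin r)).powerset,
      (-1 : ℤ) ^ S.card * ((Omega a n).filter fun x => ∀ k ∈ S, D / a k ≤ x k).card
        = (-1 : ℤ) ^ S.card *
            (if S.card * D ≤ n then (restrictedPartition a (n - S.card * D) : ℤ) else 0) := by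
    intro S _
    rw [count_S a ha D hD hdvd n S]
    split_ifs <;> push_cast <;> ring
  rw [Finset.sum_congr rfl step3]
  -- Step 4: group by cardinality
  rw [Finset.sum_powerset_apply_card
    (fun m => (-1 : ℤ) ^ m * (if m * D ≤ n then (restrictedPartition a (n - m * D) : ℤ) else 0))]
  simp only [Finset.card_univ, Fintype.card_fin, nsmul_eq_mul]
  -- Step 5: compare the two ranges
  have hsub1 : Finset.range (r + 1) ⊆ Finset.range (max r (n / D) + 1) :=
    Finset.range_subset_range.2 (Nat.succ_le_succ (le_max_left _ _))
  have hsub2 : Finset.range (n / D + 1) ⊆ Finset.range (max r (n / D) + 1) :=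
    Finset.range_subset_range.2 (Nat.succ_le_succ (le_max_right _ _))
  have hchoose : ∀ m ∈ Finset.range (max r (n / D) + 1), m ∉ Finset.range (r + 1) →
      (r.choose m : ℤ) *
        ((-1 : ℤ) ^ m * (if m * D ≤ n then (restrictedPartition a (n - m * D) : ℤ) else 0)) = 0 := by
    intro m _ hm
    rw [Finset.mem_range, not_lt] at hm
    rw [Nat.choose_eq_zero_of_lt (Nat.lt_of_succ_le hm)]
    simp
  have hzero : ∀ m ∈ Finset.range (max r (n / D) + 1), m ∉ Finset.range (n / D + 1) →
      (r.choose m : ℤ) *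
        ((-1 : ℤ) ^ m * (if m * D ≤ n then (restrictedPartition a (n - m * D) : ℤ) else 0)) = 0 := by
    intro m _ hm
    rw [Finset.mem_range, not_lt] at hm
    have hng : ¬ m * D ≤ n := by
      intro hle
      exact Nat.not_succ_le_self (n / D)
        (le_trans hm ((Nat.le_div_iff_mul_le hD).2 hle))
    rw [if_neg hng, mul_zero, mul_zero]
  rw [Finset.sum_subset hsub1 hchoose, ← Finset.sum_subset hsub2 hzero]
  refine Finset.sum_congr rfl fun j hj => ?_
  rw [Finset.mem_range] at hj
  have hj' : j * D ≤ n :=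
    le_trans (Nat.mul_le_mul_right _ (Nat.lt_succ_iff.mp hj)) (Nat.div_mul_le_self n D)
  rw [if_pos hj']
  ring
end

section
/- For every natural number n, f_a(n) = (1/(r−1)!) Σ_{j=0}^{⌊n/D⌋} (−1)^j binom(r, j) · Σ over all tuples (j_1,…,j_r) of integers with 0 ≤ j_k ≤ D/a_k − 1 for all k and a_1j_1+⋯+a_rj_r ≡ n (mod D), of ∏_{ℓ=1}^{r−1} ((n − a_1j_1 − ⋯ − a_rj_r)/D + ℓ − j). -/
open Polynomial Finset
open scoped Nat

theorem Polynomial.sum_range_neg_one_pow_mul_choose_mul_eval_eq_zero {R : Type*} [CommRing R]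
    {p : R[X]} {n : ℕ} (hp : p.natDegree < n) :
    ∑ k ∈ range (n + 1), (-1 : R) ^ k * n.choose k * p.eval (k : R) = 0 := by
  have h := congr_fun (p.fwdDiff_iter_eq_zero_of_degree_lt hp) 0
  rw [fwdDiff_iter_eq_sum_shift] at h
  calc ∑ k ∈ range (n + 1), (-1 : R) ^ k * n.choose k * p.eval (k : R)
      = (-1) ^ n * ∑ k ∈ range (n + 1),
          ((-1 : ℤ) ^ (n - k) * n.choose k) • p.eval (0 + k • (1 : R)) := by
        rw [mul_sum]
        refine sum_congr rfl fun k hk => ?_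
        obtain ⟨i, rfl⟩ := Nat.exists_eq_add_of_le (mem_range_succ_iff.mp hk)
        simp only [add_tsub_cancel_left, zsmul_eq_mul, nsmul_eq_mul, zero_add, mul_one]
        push_cast
        have hsq : ((-1 : R) ^ i) ^ 2 = 1 := by rw [← pow_mul, mul_comm, pow_mul]; simp
        linear_combination (-(-1 : R) ^ k * (k + i).choose k * p.eval (k : R)) * hsq
    _ = 0 := by rw [h, Pi.zero_apply, mul_zero]

theorem prod_Icc_add_sub_eq_zero {R : Type*} [CommRing R] {r j : ℕ} {m : ℤ}
    (h₁ : m < j) (h₂ : j < m + r) : ∏ ℓ ∈ Icc 1 (r - 1), ((m : R) + ℓ - j) = 0 := by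
  refine prod_eq_zero (i := (j - m).toNat) (mem_Icc.mpr (by omega)) ?_
  have : (((j - m).toNat : ℤ) : R) = j - m := by rw [Int.toNat_of_nonneg (by omega)]; push_cast; rfl
  rw [← Int.cast_natCast, this]; ring

section AlternatingSum

variable {r : ℕ}

theorem sum_range_alternating_prod_eq_zero_of_pos (hr : 1 ≤ r) {m : ℤ} {M : ℕ} (hm : 0 < m)
    (hM : m ≤ M) :
    ∑ j ∈ range (M + 1), (-1 : ℚ) ^ j * r.choose j * ∏ ℓ ∈ Icc 1 (r - 1), ((m : ℚ) + ℓ - j) = 0 := by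
  set p : ℚ[X] := ∏ ℓ ∈ Icc 1 (r - 1), (C ((m : ℚ) + ℓ) - X)
  have hp : p.natDegree < r := by
    refine (natDegree_prod_le _ _).trans_lt ?_
    calc ∑ ℓ ∈ Icc 1 (r - 1), (C ((m : ℚ) + ℓ) - X).natDegree
        ≤ ∑ _ℓ ∈ Icc 1 (r - 1), 1 := by
          gcongr with ℓ
          exact (natDegree_sub_le_of_le (natDegree_C _).le natDegree_X_le).trans (by simp)
      _ < r := by simp only [sum_const, Nat.card_Icc, smul_eq_mul, mul_one]; omega
  have hvanish : ∀ j ≥ min M r + 1,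
      (-1 : ℚ) ^ j * r.choose j * ∏ ℓ ∈ Icc 1 (r - 1), ((m : ℚ) + ℓ - j) = 0 := by
    intro j hj
    rcases lt_or_ge r j with hrj | hjr
    · simp [Nat.choose_eq_zero_of_lt hrj]
    · rw [prod_Icc_add_sub_eq_zero (by omega) (by omega), mul_zero]
  rw [eventually_constant_sum hvanish (by omega),
    ← eventually_constant_sum hvanish (n := r + 1) (by omega)]
  simpa [p, eval_prod] using sum_range_neg_one_pow_mul_choose_mul_eval_eq_zero hp

theorem sum_range_alternating_prod_eq_zero_of_neg {m : ℤ} {M : ℕ} (hm : m < 0) (hM : M < m + r) :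
    ∑ j ∈ range (M + 1), (-1 : ℚ) ^ j * r.choose j * ∏ ℓ ∈ Icc 1 (r - 1), ((m : ℚ) + ℓ - j) = 0 :=
  sum_eq_zero fun j hj => by
    rw [prod_Icc_add_sub_eq_zero (by omega) (by have := mem_range.mp hj; omega), mul_zero]

theorem sum_range_alternating_prod_sub_eq_factorial {M : ℕ} (hM : M < r) :
    ∑ j ∈ range (M + 1), (-1 : ℚ) ^ j * r.choose j * ∏ ℓ ∈ Icc 1 (r - 1), ((ℓ : ℚ) - j) =
      (r - 1)! := by
  rw [sum_eq_single 0]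
  · simp only [pow_zero, Nat.choose_zero_right, Nat.cast_one, one_mul, Nat.cast_zero, sub_zero]
    rw [← Nat.cast_prod, ← Ico_add_one_right_eq_Icc, prod_Ico_id_eq_factorial]
  · intro j hj hj0
    rw [prod_eq_zero (i := j) (mem_Icc.mpr ⟨by omega, by have := mem_range.mp hj; omega⟩)
      (sub_self _), mul_zero]
  · simp

end AlternatingSum

theorem sum_range_alternating_prod_eq_ite {r D n s : ℕ} (hr : 1 ≤ r) (hD : 0 < D)
    (hmod : s % D = n % D) (hs : s < r * D) :
    ∑ j ∈ range (n / D + 1), (-1 : ℚ) ^ j * r.choose j *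
        ∏ ℓ ∈ Icc 1 (r - 1), (((n : ℚ) - s) / D + ℓ - j) =
      if s = n then ((r - 1)! : ℚ) else 0 := by
  obtain ⟨m, hm⟩ : (D : ℤ) ∣ n - s := Nat.modEq_iff_dvd.mp hmod
  have hq : ((n : ℚ) - s) / D = m := by
    rw [div_eq_iff (by positivity)]
    exact_mod_cast hm.trans (mul_comm _ _)
  have hnD : ((n / D : ℕ) : ℤ) = n / D := Int.natCast_div n D
  rw [hq]
  rcases lt_trichotomy m 0 with hneg | rfl | hpos
  · rw [if_neg (by nlinarith), sum_range_alternating_prod_eq_zero_of_neg hneg]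
    rw [hnD]
    exact Int.ediv_lt_of_lt_mul (by positivity) (by nlinarith)
  · rw [if_pos (by omega)]
    simpa using sum_range_alternating_prod_sub_eq_factorial (M := n / D) (r := r)
      (Nat.div_lt_of_lt_mul (by rw [mul_comm]; omega))
  · rw [if_neg (by nlinarith), sum_range_alternating_prod_eq_zero_of_pos hr hpos]
    rw [hnD]
    exact Int.le_ediv_of_mul_le (by positivity) (by nlinarith)

theorem fa_eq_card_filter {r : ℕ} {a : Fin r → ℕ} {D : ℕ} (h : ∀ k, 0 < D / a k) (n : ℕ) :
    fa a D n = #{t : ∀ k, Fin (D / a k) | ∑ k, a k * (t k : ℕ) = n} := by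
  let e : {j : Fin r → ℕ // (∀ k, j k ≤ D / a k - 1) ∧ ∑ k, a k * j k = n} ≃
      {t : ∀ k, Fin (D / a k) // ∑ k, a k * (t k : ℕ) = n} :=
    { toFun := fun j => ⟨fun k => ⟨j.1 k, by have := j.2.1 k; have := h k; omega⟩, j.2.2⟩
      invFun := fun t => ⟨fun k => t.1 k, fun k => Nat.le_sub_one_of_lt (t.1 k).isLt, t.2⟩
      left_inv := fun _ => rfl
      right_inv := fun _ => rfl }
  rw [fa, Nat.card_congr e, Nat.card_eq_fintype_card, Fintype.card_subtype]

theorem sum_mul_val_lt_mul {r : ℕ} {a : Fin r → ℕ} {D : ℕ} (hr : 1 ≤ r) (ha : ∀ i, 0 < a i)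
    (t : ∀ k, Fin (D / a k)) : ∑ k, a k * (t k : ℕ) < r * D := by
  have hne : (univ : Finset (Fin r)).Nonempty := univ_nonempty_iff.mpr ⟨⟨0, hr⟩⟩
  calc ∑ k, a k * (t k : ℕ) < ∑ _k : Fin r, D :=
        sum_lt_sum_of_nonempty hne fun k _ =>
          (Nat.mul_lt_mul_of_pos_left (t k).isLt (ha k)).trans_le (Nat.mul_div_le D (a k))
    _ = r * D := by simp

theorem stmt6 (r : ℕ) (hr : 1 ≤ r) (a : Fin r → ℕ) (ha : ∀ i, 0 < a i)
    (D : ℕ) (hD : 0 < D) (hdvd : ∀ i, a i ∣ D) :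
    ∀ n : ℕ, (fa a D n : ℚ) =
      (1 / (r - 1).factorial : ℚ) *
        ∑ j ∈ Finset.range (n / D + 1),
          (-1) ^ j * (r.choose j : ℚ) *
            ∑ t ∈ Finset.univ.filter
                (fun t : ∀ k : Fin r, Fin (D / a k) =>
                  (∑ k, a k * (t k : ℕ)) % D = n % D),
              ∏ ℓ ∈ Finset.Icc 1 (r - 1),
                (((n : ℚ) - ∑ i, (a i : ℚ) * (t i : ℕ)) / (D : ℚ) + (ℓ : ℚ) - (j : ℚ)) := by
  intro n
  have hinner : ∀ t ∈ univ.filter (fun t : ∀ k : Fin r, Fin (D / a k) =>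
      (∑ k, a k * (t k : ℕ)) % D = n % D),
      ∑ j ∈ range (n / D + 1), (-1) ^ j * (r.choose j : ℚ) *
        ∏ ℓ ∈ Icc 1 (r - 1), (((n : ℚ) - ∑ i, (a i : ℚ) * (t i : ℕ)) / D + ℓ - j) =
      if ∑ k, a k * (t k : ℕ) = n then ((r - 1)! : ℚ) else 0 := fun t ht => by
    simpa using sum_range_alternating_prod_eq_ite hr hD (mem_filter.mp ht).2
      (sum_mul_val_lt_mul hr ha t)
  rw [eq_comm, one_div, inv_mul_eq_iff_eq_mul₀ (by positivity)]
  simp_rw [mul_sum]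
  rw [sum_comm, sum_congr rfl hinner, sum_ite, sum_const_zero, add_zero, sum_const, filter_filter,
    fa_eq_card_filter fun k => Nat.div_pos (Nat.le_of_dvd hD (hdvd k)) (ha k), nsmul_eq_mul,
    mul_comm]
  congr 3
  ext t
  simpa only [mem_filter, mem_univ, true_and] using and_iff_right_of_imp fun h => h ▸ rfl
end

section
/- For every natural number n, p_a(n) = Σ_{j=0}^{⌊n/D⌋} binom(r + j − 1, j) f_a(n − jD). -/
lemma finite_aux {r : ℕ} (P : (Fin r → ℕ) → Prop) (B : ℕ)
    (h : ∀ x, P x → ∀ i, x i ≤ B) : Finite {x : Fin r → ℕ // P x} := by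
  apply Finite.of_injective
    (fun x => fun i => (⟨x.1 i, Nat.lt_succ_of_le (h x.1 x.2 i)⟩ : Fin (B + 1)))
  intro x y hxy
  ext i
  exact congrArg Fin.val (congrFun hxy i)

lemma card_tuples_sum (r m : ℕ) :
    Nat.card {q : Fin r → ℕ // ∑ i, q i = m} = (r + m - 1).choose m := by
  have e : {q : Fin r → ℕ // ∑ i, q i = m} ≃ Sym (Fin r) m := by
    refine Equiv.subtypeEquiv
      (Finsupp.equivFunOnFinite.symm.trans Multiset.toFinsupp.toEquiv.symm) ?_
    intro q
    have h : Multiset.card (Multiset.toFinsupp.toEquiv.symm (Finsupp.equivFunOnFinite.symm q))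
        = ∑ i, q i := by
      show Multiset.card (Multiset.toFinsupp.symm _) = _
      rw [Multiset.toFinsupp_symm_apply, Finsupp.card_toMultiset,
        Finsupp.sum_fintype _ _ (fun _ => rfl)]
      rfl
    rw [Equiv.trans_apply, h]
  rw [Nat.card_congr e, Nat.card_eq_fintype_card, Sym.card_sym_eq_choose, Fintype.card_fin]

lemma nat_card_sigma {ι : Type*} [Fintype ι] (F : ι → Type*) [∀ i, Finite (F i)] :
    Nat.card (Σ i, F i) = ∑ i, Nat.card (F i) := by
  haveI := fun i => Fintype.ofFinite (F i)
  simp [Nat.card_eq_fintype_card]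

lemma sigma_eq_aux {r : ℕ} (a : Fin r → ℕ) (D n N : ℕ) {v w : ℕ} (hv : v < N) (hw : w < N)
    (h : v = w) {j j' q q' : Fin r → ℕ} (hj : ∀ i, j i = j' i) (hq : ∀ i, q i = q' i)
    (p1 : (∀ k, j k ≤ D / a k - 1) ∧ ∑ k, a k * j k = n - v * D)
    (p2 : ∑ i, q i = v)
    (p1' : (∀ k, j' k ≤ D / a k - 1) ∧ ∑ k, a k * j' k = n - w * D)
    (p2' : ∑ i, q' i = w) :
    (⟨⟨v, hv⟩, ⟨j, p1⟩, ⟨q, p2⟩⟩ : Σ m : Fin N,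
      {j : Fin r → ℕ // (∀ k, j k ≤ D / a k - 1) ∧ ∑ k, a k * j k = n - m.1 * D} ×
      {q : Fin r → ℕ // ∑ i, q i = m.1}) = ⟨⟨w, hw⟩, ⟨j', p1'⟩, ⟨q', p2'⟩⟩ := by
  subst h
  have hj2 : j = j' := funext hj
  have hq2 : q = q' := funext hq
  subst hj2; subst hq2
  rfl

theorem stmt7 (r : ℕ) (hr : 1 ≤ r) (a : Fin r → ℕ) (ha : ∀ i, 0 < a i)
    (D : ℕ) (hD : 0 < D) (hdvd : ∀ i, a i ∣ D) :
    ∀ n : ℕ, restrictedPartition a n =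
      ∑ j ∈ Finset.range (n / D + 1),
        (r + j - 1).choose j * fa a D (n - j * D) := by
  intro n
  have hc : ∀ i, a i * (D / a i) = D := fun i => Nat.mul_div_cancel' (hdvd i)
  have hcpos : ∀ i, 0 < D / a i := fun i => Nat.div_pos (Nat.le_of_dvd hD (hdvd i)) (ha i)
  have key : ∀ x : Fin r → ℕ,
      ∑ i, a i * x i = ∑ i, a i * (x i % (D / a i)) + D * ∑ i, x i / (D / a i) := by
    intro x
    rw [Finset.mul_sum, ← Finset.sum_add_distrib]
    refine Finset.sum_congr rfl fun i _ => ?_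
    conv_lhs => rw [← Nat.mod_add_div (x i) (D / a i)]
    rw [Nat.mul_add, ← Nat.mul_assoc, hc i]
  have main : ∀ x : {x : Fin r → ℕ // ∑ i, a i * x i = n},
      (∑ i, x.1 i / (D / a i)) < n / D + 1 ∧
      (∀ k, x.1 k % (D / a k) ≤ D / a k - 1) ∧
      ∑ i, a i * (x.1 i % (D / a i)) = n - (∑ i, x.1 i / (D / a i)) * D := by
    intro x
    have h := key x.1
    rw [x.2] at h
    have hcm : (∑ i, x.1 i / (D / a i)) * D = D * ∑ i, x.1 i / (D / a i) := Nat.mul_comm _ _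
    refine ⟨?_, ?_, by omega⟩
    · have h2 : (∑ i, x.1 i / (D / a i)) * D ≤ n := by omega
      have := (Nat.le_div_iff_mul_le hD).mpr h2
      omega
    · intro k
      have := Nat.mod_lt (x.1 k) (hcpos k)
      omega
  have inv : ∀ (m : ℕ), m < n / D + 1 → ∀ (j q : Fin r → ℕ),
      (∑ k, a k * j k = n - m * D) → (∑ i, q i = m) →
      ∑ i, a i * (j i + (D / a i) * q i) = n := by
    intro m hm j q hjsum hq
    have h1 : ∑ i, a i * (j i + (D / a i) * q i) = ∑ i, a i * j i + D * ∑ i, q i := by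
      rw [Finset.mul_sum, ← Finset.sum_add_distrib]
      refine Finset.sum_congr rfl fun i _ => ?_
      rw [Nat.mul_add, ← Nat.mul_assoc, hc i]
    rw [h1, hjsum, hq]
    have hmn : m * D ≤ n := by
      calc m * D ≤ (n / D) * D := Nat.mul_le_mul_right D (by omega)
      _ ≤ n := Nat.div_mul_le_self n D
    have : D * m = m * D := Nat.mul_comm _ _
    omega
  have E : {x : Fin r → ℕ // ∑ i, a i * x i = n} ≃
      Σ m : Fin (n / D + 1),
        {j : Fin r → ℕ // (∀ k, j k ≤ D / a k - 1) ∧ ∑ k, a k * j k = n - m.1 * D} ×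
        {q : Fin r → ℕ // ∑ i, q i = m.1} :=
    { toFun := fun x => ⟨⟨∑ i, x.1 i / (D / a i), (main x).1⟩,
        ⟨fun i => x.1 i % (D / a i), (main x).2.1, (main x).2.2⟩,
        ⟨fun i => x.1 i / (D / a i), rfl⟩⟩
      invFun := fun p => ⟨fun i => p.2.1.1 i + (D / a i) * p.2.2.1 i,
        inv p.1.1 p.1.2 p.2.1.1 p.2.2.1 p.2.1.2.2 p.2.2.2⟩
      left_inv := by
        intro x
        ext i
        exact Nat.mod_add_div (x.1 i) (D / a i)
      right_inv := by
        rintro ⟨⟨m, hm⟩, ⟨j, hjbox, hjsum⟩, ⟨q, hq⟩⟩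
        have h1 : ∀ i, (j i + (D / a i) * q i) / (D / a i) = q i := by
          intro i
          rw [Nat.add_mul_div_left _ _ (hcpos i),
            Nat.div_eq_of_lt (by have := hjbox i; have := hcpos i; omega)]
          omega
        have h2 : ∀ i, (j i + (D / a i) * q i) % (D / a i) = j i := by
          intro i
          rw [Nat.add_mul_mod_self_left]
          exact Nat.mod_eq_of_lt (by have := hjbox i; have := hcpos i; omega)
        exact sigma_eq_aux a D n (n / D + 1) _ hm
          ((Finset.sum_congr rfl fun i _ => h1 i).trans hq) h2 h1 _ _ _ _ }
  haveI : ∀ m : Fin (n / D + 1), Finite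
      {j : Fin r → ℕ // (∀ k, j k ≤ D / a k - 1) ∧ ∑ k, a k * j k = n - m.1 * D} := by
    intro m
    refine finite_aux _ (n - m.1 * D) fun x hx i => ?_
    have h1 : a i * x i ≤ ∑ k, a k * x k :=
      Finset.single_le_sum (f := fun k => a k * x k) (fun k _ => Nat.zero_le _) (Finset.mem_univ i)
    have h2 : x i ≤ a i * x i := Nat.le_mul_of_pos_left _ (ha i)
    omega
  haveI : ∀ m : Fin (n / D + 1), Finite {q : Fin r → ℕ // ∑ i, q i = m.1} := by
    intro m
    refine finite_aux _ m.1 fun x hx i => ?_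
    have h1 : x i ≤ ∑ k, x k :=
      Finset.single_le_sum (f := fun k => x k) (fun k _ => Nat.zero_le _) (Finset.mem_univ i)
    omega
  rw [restrictedPartition, Nat.card_congr E, nat_card_sigma,
    ← Fin.sum_univ_eq_sum_range (fun j => (r + j - 1).choose j * fa a D (n - j * D))]
  refine Finset.sum_congr rfl fun m _ => ?_
  rw [Nat.card_prod, card_tuples_sum, fa, Nat.mul_comm]
end

section
/- Setting σ = a_1 + ⋯ + a_r, for every natural number n one has (r−1)! · p_a(n) = Σ_{j = ⌈(n+σ)/D⌉ − r}^{⌊n/D⌋} (j+1)(j+2)⋯(j+r−1) · f_a(n − jD), where the sum is over all integers j in the indicated (possibly partly negative) range; note that n − jD ≥ 0 for every such j. -/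
open Finset

lemma add_mul_mod_self_of_lt {j q : ℕ} (h : j < q) (y : ℕ) : (j + q * y) % q = j := by
  rw [Nat.add_mul_mod_self_left, Nat.mod_eq_of_lt h]

lemma add_mul_div_self_of_lt {j q : ℕ} (h : j < q) (y : ℕ) : (j + q * y) / q = y := by
  rw [Nat.add_mul_div_left _ _ (Nat.zero_lt_of_lt h), Nat.div_eq_of_lt h, zero_add]

lemma card_finAntidiagonal (r m : ℕ) : #(finAntidiagonal r m) = Nat.multichoose r m :=
  calc #(finAntidiagonal r m)
      = Nat.card {f : Fin r → ℕ // ∑ i, f i = m} :=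
        (Nat.card_eq_finsetCard _).symm.trans
          (Nat.card_congr (Equiv.subtypeEquivRight fun _ => mem_finAntidiagonal))
    _ = Nat.card (Sym (Fin r) m) := Nat.card_congr (Sym.equivNatSumOfFintype (Fin r) m).symm
    _ = Nat.multichoose r m := by
        rw [Nat.card_eq_fintype_card, Sym.card_sym_eq_multichoose, Fintype.card_fin]

lemma sum_range_eq_sum_Icc_natCast {M : Type*} [AddCommMonoid M] (f : ℤ → M) (N : ℕ) :
    ∑ m ∈ range (N + 1), f m = ∑ j ∈ Icc (0 : ℤ) N, f j := by
  rw [Int.Icc_eq_finset_map, sum_map]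
  simp

lemma prod_Icc_add_eq_zero {d : ℕ} {j : ℤ} (h₁ : -d ≤ j) (h₂ : j < 0) :
    ∏ ℓ ∈ Icc 1 d, (j + (ℓ : ℤ)) = 0 :=
  prod_eq_zero (i := (-j).toNat) (mem_Icc.2 ⟨by omega, by omega⟩) (by omega)

lemma prod_Icc_natCast_add (m d : ℕ) :
    ∏ ℓ ∈ Icc 1 d, ((m : ℤ) + ℓ) = ((m + 1).ascFactorial d : ℕ) := by
  induction d with
  | zero => simp
  | succ d ih =>
    rw [prod_Icc_succ_top (by omega), ih, Nat.ascFactorial_succ]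
    push_cast
    ring

lemma factorial_mul_multichoose_succ (d m : ℕ) :
    d.factorial * Nat.multichoose (d + 1) m = (m + 1).ascFactorial d := by
  rw [Nat.ascFactorial_eq_factorial_mul_choose, Nat.multichoose_eq, Nat.add_right_comm,
    Nat.add_sub_cancel, add_comm d m, Nat.choose_symm_add]

lemma mul_le_of_le_natCast_div {n D : ℕ} (hD : 0 < D) {j : ℤ} (h : j ≤ ((n / D : ℕ) : ℤ)) :
    j * D ≤ n := by
  rw [Int.natCast_div] at h
  exact (Int.le_ediv_iff_mul_le (by exact_mod_cast hD)).1 h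

lemma mul_lt_sub_add_of_lt_ceil_sub {n D s r : ℕ} (hD : 0 < D) {j : ℤ}
    (h : j < ⌈((n + s : ℕ) : ℚ) / (D : ℚ)⌉ - r) : (r * D : ℤ) < n - j * D + s := by
  have h' : (j + r : ℤ) < ((n + s : ℕ) : ℚ) / D := by
    exact_mod_cast Int.lt_ceil.1 (by omega : j + r < _)
  rw [lt_div_iff₀ (by exact_mod_cast hD)] at h'
  have : ((j + r) * D : ℤ) < ((n + s : ℕ) : ℤ) := by exact_mod_cast h'
  push_cast at this
  linarith

section Decomposition

variable {r : ℕ} (a : Fin r → ℕ) (D : ℕ)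

def boxSolutions (N : ℕ) : Finset (Fin r → ℕ) :=
  {j ∈ Fintype.piFinset fun k => range (D / a k) | ∑ k, a k * j k = N}

def partitionDecompositions (n : ℕ) : Finset (Σ _ : ℕ, (Fin r → ℕ) × (Fin r → ℕ)) :=
  (range (n / D + 1)).sigma fun m => boxSolutions a D (n - m * D) ×ˢ finAntidiagonal r m

variable {a D}

lemma div_pos_of_dvd (hD : 0 < D) (hdvd : ∀ i, a i ∣ D) (i : Fin r) : 0 < D / a i :=
  Nat.div_pos (Nat.le_of_dvd hD (hdvd i)) (Nat.pos_of_dvd_of_pos (hdvd i) hD)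

lemma mem_boxSolutions {N : ℕ} {j : Fin r → ℕ} :
    j ∈ boxSolutions a D N ↔ (∀ k, j k < D / a k) ∧ ∑ k, a k * j k = N := by
  simp [boxSolutions]

lemma fa_eq_card_boxSolutions (hD : 0 < D) (hdvd : ∀ i, a i ∣ D) (N : ℕ) :
    fa a D N = #(boxSolutions a D N) := by
  rw [fa, ← Nat.card_eq_finsetCard]
  refine Nat.card_congr (Equiv.subtypeEquivRight fun j => ?_)
  simp only [mem_boxSolutions, Nat.lt_iff_le_pred (div_pos_of_dvd hD hdvd _)]

lemma sum_mul_eq_sum_mul_mod_add (hdvd : ∀ i, a i ∣ D) (x : Fin r → ℕ) :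
    ∑ i, a i * x i = ∑ i, a i * (x i % (D / a i)) + (∑ i, x i / (D / a i)) * D := by
  rw [sum_mul, ← sum_add_distrib]
  refine sum_congr rfl fun i _ => ?_
  conv_lhs => rw [← Nat.mod_add_div (x i) (D / a i)]
  rw [mul_add, ← mul_assoc, Nat.mul_div_cancel' (hdvd i), mul_comm D]

lemma mem_partitionDecompositions {n m : ℕ} {j y : Fin r → ℕ} :
    ⟨m, j, y⟩ ∈ partitionDecompositions a D n ↔
      m ≤ n / D ∧ ((∀ k, j k < D / a k) ∧ ∑ k, a k * j k = n - m * D) ∧ ∑ i, y i = m := by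
  simp [partitionDecompositions, mem_boxSolutions]

lemma mod_add_div_mem_partitionDecompositions (hD : 0 < D) (hdvd : ∀ i, a i ∣ D) {n : ℕ}
    {x : Fin r → ℕ} (hx : ∑ i, a i * x i = n) :
    (⟨∑ i, x i / (D / a i), fun i => x i % (D / a i), fun i => x i / (D / a i)⟩ :
      Σ _ : ℕ, (Fin r → ℕ) × (Fin r → ℕ)) ∈ partitionDecompositions a D n := by
  rw [sum_mul_eq_sum_mul_mod_add hdvd] at hx
  refine mem_partitionDecompositions.2
    ⟨?_, ⟨fun k => Nat.mod_lt _ (div_pos_of_dvd hD hdvd k), by omega⟩, rfl⟩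
  rw [Nat.le_div_iff_mul_le hD]
  omega

lemma sum_mul_eq_of_mem_partitionDecompositions (hD : 0 < D) (hdvd : ∀ i, a i ∣ D)
    {n : ℕ} {p : Σ _ : ℕ, (Fin r → ℕ) × (Fin r → ℕ)} (hp : p ∈ partitionDecompositions a D n) :
    ∑ i, a i * (p.2.1 i + D / a i * p.2.2 i) = n := by
  obtain ⟨m, j, y⟩ := p
  obtain ⟨hm, ⟨hj, hjN⟩, rfl⟩ := mem_partitionDecompositions.1 hp
  have hmD : (∑ i, y i) * D ≤ n := (Nat.le_div_iff_mul_le hD).1 hm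
  rw [sum_mul_eq_sum_mul_mod_add hdvd]
  simp only [add_mul_mod_self_of_lt (hj _), add_mul_div_self_of_lt (hj _)]
  omega

lemma fa_eq_zero_of_lt (hD : 0 < D) (hdvd : ∀ i, a i ∣ D) {N : ℕ}
    (hN : r * D < N + ∑ i, a i) : fa a D N = 0 := by
  rw [fa_eq_card_boxSolutions hD hdvd, card_eq_zero, eq_empty_iff_forall_notMem]
  intro j hj
  obtain ⟨hlt, rfl⟩ := mem_boxSolutions.1 hj
  have hle : ∑ k, (a k * j k + a k) ≤ ∑ _k : Fin r, D := sum_le_sum fun k _ =>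
    calc a k * j k + a k = a k * (j k + 1) := by ring
      _ ≤ a k * (D / a k) := Nat.mul_le_mul_left _ (hlt k)
      _ = D := Nat.mul_div_cancel' (hdvd k)
  rw [sum_add_distrib, sum_const, card_univ, Fintype.card_fin, smul_eq_mul] at hle
  omega

theorem restrictedPartition_eq_sum_fa_mul_multichoose (hD : 0 < D) (hdvd : ∀ i, a i ∣ D)
    (n : ℕ) :
    restrictedPartition a n =
      ∑ m ∈ range (n / D + 1), fa a D (n - m * D) * Nat.multichoose r m := by
  simp only [fa_eq_card_boxSolutions hD hdvd, ← card_finAntidiagonal, ← card_product]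
  rw [← card_sigma, restrictedPartition, ← Nat.card_eq_finsetCard]
  exact Nat.card_congr
    { toFun := fun x => ⟨_, mod_add_div_mem_partitionDecompositions hD hdvd x.2⟩
      invFun := fun p => ⟨_, sum_mul_eq_of_mem_partitionDecompositions hD hdvd p.2⟩
      left_inv := fun x => Subtype.ext <| funext fun i => Nat.mod_add_div _ _
      right_inv := fun ⟨⟨m, j, y⟩, hp⟩ => by
        obtain ⟨-, ⟨hj, -⟩, rfl⟩ := mem_partitionDecompositions.1 hp
        simp only [add_mul_mod_self_of_lt (hj _), add_mul_div_self_of_lt (hj _)] }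

end Decomposition

section Summand

variable {d : ℕ} (a : Fin (d + 1) → ℕ) {D : ℕ}

lemma natCast_factorial_mul_restrictedPartition (hD : 0 < D) (hdvd : ∀ i, a i ∣ D) (n : ℕ) :
    ((d.factorial * restrictedPartition a n : ℕ) : ℤ) =
      ∑ j ∈ Icc (0 : ℤ) (n / D : ℕ),
        (∏ ℓ ∈ Icc 1 d, (j + (ℓ : ℤ))) * (fa a D ((n : ℤ) - j * D).toNat : ℤ) := by
  rw [← sum_range_eq_sum_Icc_natCast, restrictedPartition_eq_sum_fa_mul_multichoose hD hdvd,
    mul_sum, Nat.cast_sum]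
  refine sum_congr rfl fun m hm => ?_
  have hmD : m * D ≤ n := (Nat.le_div_iff_mul_le hD).1 (Nat.lt_succ_iff.1 (mem_range.1 hm))
  have hsub : ((n : ℤ) - m * D).toNat = n - m * D := by omega
  rw [mul_left_comm, factorial_mul_multichoose_succ, prod_Icc_natCast_add, hsub]
  push_cast
  ring

lemma prod_mul_fa_eq_zero_of_lt_ceil (hD : 0 < D) (hdvd : ∀ i, a i ∣ D) {n : ℕ} {j : ℤ}
    (h₁ : -(d : ℤ) ≤ j) (h₂ : j < ⌈((n + ∑ i, a i : ℕ) : ℚ) / (D : ℚ)⌉ - (d + 1 : ℕ)) :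
    (∏ ℓ ∈ Icc 1 d, (j + (ℓ : ℤ))) * (fa a D ((n : ℤ) - j * D).toNat : ℤ) = 0 := by
  rcases lt_or_ge j 0 with hj | hj
  · rw [prod_Icc_add_eq_zero h₁ hj, zero_mul]
  · have hlt := mul_lt_sub_add_of_lt_ceil_sub hD h₂
    rw [fa_eq_zero_of_lt hD hdvd (by zify; push_cast at hlt ⊢; omega), Nat.cast_zero, mul_zero]

end Summand

theorem stmt8_general (r : ℕ) (hr : 1 ≤ r) (a : Fin r → ℕ)
    (D : ℕ) (hD : 0 < D) (hdvd : ∀ i, a i ∣ D)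
    (σ : ℕ) (hσ : σ = ∑ i, a i) :
    ∀ n : ℕ,
      (∀ j ∈ Finset.Icc (⌈((n + σ : ℕ) : ℚ) / (D : ℚ)⌉ - r) ((n / D : ℕ) : ℤ),
        0 ≤ (n : ℤ) - j * D) ∧
      ((r - 1).factorial * restrictedPartition a n : ℤ) =
        ∑ j ∈ Finset.Icc (⌈((n + σ : ℕ) : ℚ) / (D : ℚ)⌉ - r) ((n / D : ℕ) : ℤ),
          (∏ ℓ ∈ Finset.Icc 1 (r - 1), (j + (ℓ : ℤ))) *
            (fa a D ((n : ℤ) - j * D).toNat : ℤ) := by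
  intro n
  refine ⟨fun j hj => sub_nonneg.2 (mul_le_of_le_natCast_div hD (mem_Icc.1 hj).2), ?_⟩
  obtain ⟨d, rfl⟩ : ∃ d, r = d + 1 := ⟨r - 1, by omega⟩
  subst hσ
  have hC : 1 ≤ ⌈((n + ∑ i, a i : ℕ) : ℚ) / (D : ℚ)⌉ := by
    have hσpos : 0 < ∑ i, a i :=
      sum_pos (fun i _ => Nat.pos_of_dvd_of_pos (hdvd i) hD) univ_nonempty
    exact Int.one_le_ceil_iff.2 (div_pos (by exact_mod_cast (by omega : 0 < n + ∑ i, a i))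
      (by exact_mod_cast hD))
  rw [Nat.add_sub_cancel, ← Nat.cast_mul, natCast_factorial_mul_restrictedPartition a hD hdvd]
  calc _ = ∑ j ∈ Icc (-d : ℤ) (n / D : ℕ),
          (∏ ℓ ∈ Icc 1 d, (j + (ℓ : ℤ))) * (fa a D ((n : ℤ) - j * D).toNat : ℤ) :=
        sum_subset (Icc_subset_Icc_left (by omega)) fun j hj hj' => by
          rw [mem_Icc] at hj hj'
          rw [prod_Icc_add_eq_zero hj.1 (by omega), zero_mul]
    _ = _ :=
        (sum_subset (Icc_subset_Icc_left (by omega)) fun j hj hj' => by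
          rw [mem_Icc] at hj hj'
          exact prod_mul_fa_eq_zero_of_lt_ceil a hD hdvd hj.1 (by omega)).symm

/-- With `σ = a 1 + ⋯ + a r`,
`(r-1)! p_a(n) = ∑_{j = ⌈(n+σ)/D⌉ - r}^{⌊n/D⌋} (j+1)⋯(j+r-1) f_a(n - jD)`,
the sum being over integers `j` in that range; moreover `n - jD ≥ 0` for every such `j`. -/
theorem stmt8 (r : ℕ) (hr : 1 ≤ r) (a : Fin r → ℕ) (ha : ∀ i, 0 < a i)
    (D : ℕ) (hD : 0 < D) (hdvd : ∀ i, a i ∣ D)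
    (σ : ℕ) (hσ : σ = ∑ i, a i) :
    ∀ n : ℕ,
      (∀ j ∈ Finset.Icc (⌈((n + σ : ℕ) : ℚ) / (D : ℚ)⌉ - r) ((n / D : ℕ) : ℤ),
        0 ≤ (n : ℤ) - j * D) ∧
      ((r - 1).factorial * restrictedPartition a n : ℤ) =
        ∑ j ∈ Finset.Icc (⌈((n + σ : ℕ) : ℚ) / (D : ℚ)⌉ - r) ((n / D : ℕ) : ℤ),
          (∏ ℓ ∈ Finset.Icc 1 (r - 1), (j + (ℓ : ℤ))) *
            (fa a D ((n : ℤ) - j * D).toNat : ℤ) :=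
  stmt8_general r hr a D hD hdvd σ hσ
end

section
/- Let r ≥ 1 and set ω_{hk} = e^{2πih/k}. Suppose (c_{hkℓ}(r)), indexed by pairs of integers 0 ≤ h < k ≤ r with gcd(h, k) = 1 and integers 1 ≤ ℓ ≤ ⌊r/k⌋, are complex numbers such that 1/((1−z)(1−z^2)⋯(1−z^r)) = Σ_{0≤h<k≤r, gcd(h,k)=1} Σ_{ℓ=1}^{⌊r/k⌋} c_{hkℓ}(r)/(z − ω_{hk})^ℓ for every complex z with |z| < 1. Then for every 1 ≤ m ≤ r, c_{01m}(r) = ((−1)^r (m−1)!/r!) · Σ_{ℓ=m}^{r} (S(ℓ, m)/(ℓ−1)!) · Σ_{i_1+⋯+i_r=r−ℓ} (B_{i_1}⋯B_{i_r}/(i_1!⋯i_r!)) · 1^{i_1} 2^{i_2} ⋯ r^{i_r}, where the inner sum is over tuples (i_1,…,i_r) of nonnegative integers with i_1+⋯+i_r = r−ℓ. -/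
/-
Clearing denominators turns the partial fraction expansion of
`f(z) = 1/((1-z)⋯(1-z^r))` into a polynomial identity, which can be evaluated at the formal
power series `z = e^t`. With `B(t) = t/(e^t - 1)` we have `1 - e^{jt} = -jt/B(jt)` and
`(e^t - 1)^{-ℓ} = t^{-ℓ} B(t)^ℓ`, so the identity becomes
`(-1)^r t^{-r} B(t)B(2t)⋯B(rt) / r! = ∑ₗ c₀₁ₗ t^{-ℓ} B(t)^ℓ + (a power series in t)`.
Now `c₀₁ₘ` is the coefficient of `t^{-1}` in `e^t (e^t - 1)^{m-1} f(e^t)`: the terms `ℓ < m`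
are regular, and for `ℓ > m` the term `e^t/(e^t - 1)^{ℓ-m+1}` is a derivative. On the other
hand `e^t (e^t - 1)^{m-1}` is the derivative of `(e^t - 1)^m/m`, whose coefficients are Stirling
numbers, and the coefficients of `B(t)B(2t)⋯B(rt)` are the inner Bernoulli sums.
-/

/-- Stirling numbers of the second kind: the number of partitions of an
`n`-element set into `k` nonempty blocks. -/
def stirling2 : ℕ → ℕ → ℕ
  | 0, 0 => 1
  | 0, _ + 1 => 0
  | _ + 1, 0 => 0
  | n + 1, k + 1 => (k + 1) * stirling2 n (k + 1) + stirling2 n k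

theorem stirling2_eq_stirlingSecond : ∀ n k, stirling2 n k = Nat.stirlingSecond n k
  | 0, 0 | 0, _ + 1 | _ + 1, 0 => rfl
  | n + 1, k + 1 => by
    rw [stirling2, Nat.stirlingSecond_succ_succ, stirling2_eq_stirlingSecond n (k + 1),
      stirling2_eq_stirlingSecond n k]

namespace PowerSeries

open Finset Nat

variable {K : Type*} [Field K] [CharZero K]

theorem constantCoeff_bernoulliPowerSeries : constantCoeff (bernoulliPowerSeries K) = 1 := by
  simp [bernoulliPowerSeries, ← coeff_zero_eq_constantCoeff_apply]

theorem coeff_bernoulliPowerSeries (n : ℕ) :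
    coeff n (bernoulliPowerSeries K) = (bernoulli n : K) / n ! := by
  simp [bernoulliPowerSeries]

theorem exp_sub_one_mul_bernoulliPowerSeries : (exp K - 1) * bernoulliPowerSeries K = X := by
  rw [mul_comm, bernoulliPowerSeries_mul_exp_sub_one]

theorem X_mul_derivative_bernoulliPowerSeries :
    X * d⁄dX K (bernoulliPowerSeries K) =
      bernoulliPowerSeries K - exp K * bernoulliPowerSeries K ^ 2 := by
  set B := bernoulliPowerSeries K
  have hB : B * (exp K - 1) = X := bernoulliPowerSeries_mul_exp_sub_one K
  have hd : d⁄dX K B * (exp K - 1) + B * exp K = 1 := by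
    simpa [Derivation.leibniz, derivative_exp, add_comm, mul_comm] using congrArg (d⁄dX K) hB
  apply mul_left_cancel₀ (X_ne_zero (R := K))
  linear_combination (X * B) * hd - X * d⁄dX K B * hB

theorem coeff_exp_mul_bernoulliPowerSeries_pow (j : ℕ) :
    coeff j (exp K * bernoulliPowerSeries K ^ (j + 1)) = if j = 0 then 1 else 0 := by
  set B := bernoulliPowerSeries K
  rcases j with _ | k
  · simp [coeff_zero_eq_constantCoeff_apply, B, constantCoeff_bernoulliPowerSeries]
  have hX : X * d⁄dX K (B ^ (k + 1)) = C ((k : K) + 1) * (B ^ (k + 1) - exp K * B ^ (k + 2)) := by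
    rw [Derivation.leibniz_pow, Nat.add_sub_cancel, smul_eq_mul, nsmul_eq_mul]
    rw [show ((k + 1 : ℕ) : K⟦X⟧) = C ((k : K) + 1) by simp]
    linear_combination C ((k : K) + 1) * B ^ k * (X_mul_derivative_bernoulliPowerSeries (K := K))
  have h := congrArg (coeff (k + 1)) hX
  rw [coeff_succ_X_mul, coeff_derivative, coeff_C_mul, map_sub] at h
  have : ((k : K) + 1) * coeff (k + 1) (exp K * B ^ (k + 2)) = 0 := by linear_combination h
  rw [if_neg k.succ_ne_zero]
  exact (mul_eq_zero.mp this).resolve_left (Nat.cast_add_one_ne_zero k)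

theorem derivative_exp_sub_one_pow (m : ℕ) :
    d⁄dX K ((exp K - 1) ^ (m + 1)) = C ((m : K) + 1) * (exp K * (exp K - 1) ^ m) := by
  rw [Derivation.leibniz_pow, Nat.add_sub_cancel, smul_eq_mul, nsmul_eq_mul, map_sub,
    derivative_exp, Derivation.map_one_eq_zero, sub_zero]
  rw [show ((m + 1 : ℕ) : K⟦X⟧) = C ((m : K) + 1) by simp]
  ring

theorem factorial_mul_coeff_exp_sub_one_pow (l m : ℕ) :
    (l ! : K) * coeff l ((exp K - 1) ^ m) = m ! * stirlingSecond l m := by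
  induction l generalizing m with
  | zero => cases m <;> simp [coeff_zero_eq_constantCoeff_apply]
  | succ l ih =>
    cases m with
    | zero => simp [coeff_one]
    | succ m =>
      have h := congrArg (coeff l) (derivative_exp_sub_one_pow (K := K) m)
      have hsplit : exp K * (exp K - 1) ^ m = (exp K - 1) ^ (m + 1) + (exp K - 1) ^ m := by ring
      rw [coeff_derivative, coeff_C_mul, hsplit, map_add] at h
      have ih₁ := ih (m + 1)
      rw [Nat.factorial_succ] at ih₁ ⊢
      rw [Nat.factorial_succ, stirlingSecond_succ_succ]
      push_cast at ih₁ ⊢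
      linear_combination (l ! : K) * h + ((m : K) + 1) * ih₁ + ((m : K) + 1) * ih m

theorem factorial_mul_coeff_exp_mul_exp_sub_one_pow (a m : ℕ) :
    (a ! : K) * coeff a (exp K * (exp K - 1) ^ m) = m ! * stirlingSecond (a + 1) (m + 1) := by
  have h := congrArg (coeff a) (derivative_exp_sub_one_pow (K := K) m)
  rw [coeff_derivative, coeff_C_mul] at h
  have hS := factorial_mul_coeff_exp_sub_one_pow (K := K) (a + 1) (m + 1)
  rw [Nat.factorial_succ, Nat.factorial_succ] at hS
  push_cast at hS
  have hm : (m : K) + 1 ≠ 0 := Nat.cast_add_one_ne_zero m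
  apply mul_left_cancel₀ hm
  linear_combination hS - (a ! : K) * h

theorem coeff_exp_mul_exp_sub_one_pow_mul (F : K⟦X⟧) (m n : ℕ) :
    coeff n (exp K * (exp K - 1) ^ m * F) =
      m ! * ∑ ℓ ∈ Icc (m + 1) (n + 1),
        (stirlingSecond ℓ (m + 1) : K) / (ℓ - 1)! * coeff (n + 1 - ℓ) F := by
  have hterm (a : ℕ) : coeff a (exp K * (exp K - 1) ^ m) =
      m ! * ((stirlingSecond (a + 1) (m + 1) : K) / a !) := by
    rw [mul_div_assoc', eq_div_iff (mod_cast factorial_ne_zero a), mul_comm,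
      factorial_mul_coeff_exp_mul_exp_sub_one_pow]
  have hlow : ∀ ℓ ∈ Icc 1 (n + 1), ℓ ∉ Icc (m + 1) (n + 1) →
      (stirlingSecond ℓ (m + 1) : K) / (ℓ - 1)! * coeff (n + 1 - ℓ) F = 0 := by
    intro ℓ hℓ hℓm
    rw [mem_Icc] at hℓ hℓm
    rw [stirlingSecond_eq_zero_of_lt (by omega)]
    simp
  have hshift (g : ℕ → K) : ∑ ℓ ∈ Icc 1 (n + 1), g ℓ = ∑ a ∈ range (n + 1), g (a + 1) := by
    rw [range_eq_Ico, sum_Ico_add' g 0 (n + 1) 1, ← Ico_add_one_right_eq_Icc, zero_add]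
  rw [sum_subset (Icc_subset_Icc_left (by omega)) hlow, hshift, coeff_mul,
    Nat.sum_antidiagonal_eq_sum_range_succ_mk, mul_sum]
  refine sum_congr rfl fun a _ => ?_
  rw [hterm, Nat.add_sub_cancel, show n + 1 - (a + 1) = n - a by omega]
  ring

variable (K) in
noncomputable def bernoulliProd (r : ℕ) : K⟦X⟧ :=
  ∏ i ∈ range r, rescale ((i + 1 : ℕ) : K) (bernoulliPowerSeries K)

theorem coeff_bernoulliProd (r b : ℕ) :
    coeff b (bernoulliProd K r) =
      ∑ i ∈ Nat.antidiagonalTuple r b, ∏ k : Fin r,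
        ((bernoulli (i k) : K) / (i k)! * (((k : ℕ) + 1 : ℕ) : K) ^ (i k)) := by
  rw [bernoulliProd, ← Fin.prod_univ_eq_prod_range (fun i => rescale ((i + 1 : ℕ) : K) _) r,
    coeff_prod]
  refine sum_nbij' (fun l k => l k) (fun x => Finsupp.equivFunOnFinite.symm x) ?_ ?_
    (fun l _ => Finsupp.equivFunOnFinite.symm_apply_apply l) (fun x _ => by simp) ?_
  · intro l hl
    rw [mem_finsuppAntidiag] at hl
    rw [Nat.mem_antidiagonalTuple]
    exact hl.1
  · intro x hx
    rw [Nat.mem_antidiagonalTuple] at hx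
    simpa [mem_finsuppAntidiag] using hx
  · intro l _
    refine prod_congr rfl fun k _ => ?_
    rw [coeff_rescale, coeff_bernoulliPowerSeries]
    ring

theorem one_sub_exp_pow_mul_rescale_bernoulliPowerSeries (k : ℕ) :
    (1 - exp K ^ k) * rescale (k : K) (bernoulliPowerSeries K) = -(C (k : K) * X) := by
  rw [exp_pow_eq_rescale_exp, ← map_one (rescale (k : K)), ← map_sub, ← map_mul, ← neg_sub,
    neg_mul, mul_comm, bernoulliPowerSeries_mul_exp_sub_one, map_neg, rescale_X]

theorem prod_one_sub_exp_pow_mul_bernoulliProd (r : ℕ) :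
    (∏ i ∈ range r, (1 - exp K ^ (i + 1))) * bernoulliProd K r =
      C ((-1) ^ r * r ! : K) * X ^ r := by
  rw [bernoulliProd, ← prod_mul_distrib]
  simp only [one_sub_exp_pow_mul_rescale_bernoulliPowerSeries, neg_eq_neg_one_mul (C _ * X),
    prod_mul_distrib, prod_const, card_range, ← map_prod, ← Nat.cast_prod,
    prod_range_add_one_eq_factorial, map_mul, map_pow, map_neg, map_one]
  ring

theorem constantCoeff_aeval_exp (p : Polynomial K) :
    constantCoeff (Polynomial.aeval (exp K) p) = p.eval 1 := by
  rw [Polynomial.aeval_def, Polynomial.hom_eval₂, constantCoeff_exp]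
  have : constantCoeff.comp (algebraMap K K⟦X⟧) = RingHom.id K := by ext; simp
  rw [this]
  rfl

theorem exists_bernoulliProd_eq {r : ℕ} {c : ℕ → K} {V G : Polynomial K} (hV : V.eval 1 ≠ 0)
    (h : (Polynomial.X - 1) ^ r * V = (∏ i ∈ range r, (1 - Polynomial.X ^ (i + 1))) *
      (∑ ℓ ∈ Icc 1 r, Polynomial.C (c ℓ) * (Polynomial.X - 1) ^ (r - ℓ) * V +
        (Polynomial.X - 1) ^ r * G)) :
    ∃ H : K⟦X⟧, bernoulliProd K r = C ((-1) ^ r * r ! : K) *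
      (∑ ℓ ∈ Icc 1 r, C (c ℓ) * X ^ (r - ℓ) * bernoulliPowerSeries K ^ ℓ + X ^ r * H) := by
  set B := bernoulliPowerSeries K
  have h' := congrArg (Polynomial.aeval (exp K)) h
  simp only [map_mul, map_pow, map_sub, map_add, map_sum, map_prod, map_one, Polynomial.aeval_X,
    Polynomial.aeval_C, algebraMap_apply, Algebra.algebraMap_self, RingHom.id_apply] at h'
  set v := Polynomial.aeval (exp K) V
  set g := Polynomial.aeval (exp K) G
  have hv : constantCoeff v ≠ 0 := by rwa [constantCoeff_aeval_exp]
  have hE : (exp K - 1) * B = X := exp_sub_one_mul_bernoulliPowerSeries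
  have hterm : ∀ ℓ ∈ Icc 1 r, (exp K - 1) ^ (r - ℓ) * B ^ r = X ^ (r - ℓ) * B ^ ℓ := by
    intro ℓ hℓ
    rw [← Nat.sub_add_cancel (mem_Icc.mp hℓ).2, pow_add B, Nat.add_sub_cancel, ← mul_assoc,
      ← mul_pow, hE]
  have key : X ^ r * v * bernoulliProd K r = C ((-1) ^ r * r ! : K) * X ^ r *
      (∑ ℓ ∈ Icc 1 r, C (c ℓ) * X ^ (r - ℓ) * B ^ ℓ * v + X ^ r * g) := by
    calc X ^ r * v * bernoulliProd K r
        = ((∏ i ∈ range r, (1 - exp K ^ (i + 1))) * bernoulliProd K r) *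
            ((∑ ℓ ∈ Icc 1 r, C (c ℓ) * (exp K - 1) ^ (r - ℓ) * v + (exp K - 1) ^ r * g) *
              B ^ r) := by
          rw [← hE, mul_pow]
          linear_combination (B ^ r * bernoulliProd K r) * h'
      _ = _ := by
          rw [prod_one_sub_exp_pow_mul_bernoulliProd, add_mul, sum_mul, mul_assoc _ g, mul_comm g,
            ← mul_assoc, ← mul_pow, hE]
          congr 2
          refine sum_congr rfl fun ℓ hℓ => ?_
          linear_combination (C (c ℓ) * v) * hterm ℓ hℓ
  have hv₀ : v ≠ 0 := fun h₀ => hv (by rw [h₀, map_zero])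
  refine ⟨g * v⁻¹, mul_left_cancel₀ (mul_ne_zero (pow_ne_zero r X_ne_zero) hv₀) ?_⟩
  rw [key, ← sum_mul]
  linear_combination -(C ((-1) ^ r * r ! : K) * X ^ r * X ^ r * g) * PowerSeries.mul_inv_cancel v hv

theorem coeff_exp_mul_exp_sub_one_pow_mul_X_pow_mul_bernoulliPowerSeries_pow {m n ℓ : ℕ}
    (hℓ : ℓ ≤ n + 1) :
    coeff n (exp K * (exp K - 1) ^ m * (X ^ (n + 1 - ℓ) * bernoulliPowerSeries K ^ ℓ)) =
      if ℓ = m + 1 then 1 else 0 := by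
  set B := bernoulliPowerSeries K
  have hXpow (k : ℕ) : (X : K⟦X⟧) ^ k = (exp K - 1) ^ k * B ^ k := by
    rw [← mul_pow, exp_sub_one_mul_bernoulliPowerSeries]
  rcases le_or_gt ℓ m with hle | hlt
  · obtain ⟨d, rfl⟩ := Nat.exists_eq_add_of_le hle
    have hX : (X : K⟦X⟧) ^ (n + 1) = X ^ (n + 1 - ℓ) * X ^ ℓ := by
      rw [← pow_add, Nat.sub_add_cancel hℓ]
    have : exp K * (exp K - 1) ^ (ℓ + d) * (X ^ (n + 1 - ℓ) * B ^ ℓ) =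
        X ^ (n + 1) * (exp K * (exp K - 1) ^ d) := by
      rw [hX, hXpow ℓ]
      ring
    rw [this, coeff_X_pow_mul', if_neg (by omega), if_neg (by omega)]
  · obtain ⟨j, rfl⟩ := Nat.exists_eq_add_of_lt hlt
    have hX : (X : K⟦X⟧) ^ (n - j) = X ^ (n + 1 - (m + j + 1)) * X ^ m := by
      rw [← pow_add]; congr 1; omega
    have : exp K * (exp K - 1) ^ m * (X ^ (n + 1 - (m + j + 1)) * B ^ (m + j + 1)) =
        X ^ (n - j) * (exp K * B ^ (j + 1)) := by
      rw [hX, hXpow m]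
      ring
    rw [this, coeff_X_pow_mul', if_pos (Nat.sub_le n j), Nat.sub_sub_self (by omega),
      coeff_exp_mul_bernoulliPowerSeries_pow]
    simp

theorem coeff_exp_mul_exp_sub_one_pow_mul_sum_add {m n : ℕ} (hm : m ≤ n) (c : ℕ → K) (H : K⟦X⟧) :
    coeff n (exp K * (exp K - 1) ^ m * (∑ ℓ ∈ Icc 1 (n + 1),
      C (c ℓ) * X ^ (n + 1 - ℓ) * bernoulliPowerSeries K ^ ℓ + X ^ (n + 1) * H)) = c (m + 1) := by
  have hterm : ∀ ℓ ∈ Icc 1 (n + 1), coeff n (exp K * (exp K - 1) ^ m *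
      (C (c ℓ) * X ^ (n + 1 - ℓ) * bernoulliPowerSeries K ^ ℓ)) = if ℓ = m + 1 then c ℓ else 0 := by
    intro ℓ hℓ
    rw [mul_assoc (C (c ℓ)), mul_left_comm, coeff_C_mul,
      coeff_exp_mul_exp_sub_one_pow_mul_X_pow_mul_bernoulliPowerSeries_pow (mem_Icc.mp hℓ).2]
    simp
  rw [mul_add, map_add, mul_sum, map_sum, sum_congr rfl hterm, sum_ite_eq',
    if_pos (mem_Icc.mpr ⟨by omega, by omega⟩), mul_left_comm, coeff_X_pow_mul', if_neg (by omega),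
    add_zero]

end PowerSeries

section PartialFractions

open Polynomial Finset

variable {K ι : Type*} [Field K] [DecidableEq ι] {S : Finset ι} {ω : ι → K}
  {L : ι → Finset ℕ} {c : ι → ℕ → K} {N : ℕ}

theorem prod_X_sub_C_pow_eq_mul_sum {D : K[X]} {U : Set K} (hU : U.Infinite)
    (hL : ∀ q ∈ S, ∀ ℓ ∈ L q, ℓ ≤ N) (hUω : ∀ z ∈ U, ∀ q ∈ S, z ≠ ω q)
    (hD : ∀ z ∈ U, D.eval z ≠ 0)
    (h : ∀ z ∈ U, (D.eval z)⁻¹ = ∑ q ∈ S, ∑ ℓ ∈ L q, c q ℓ / (z - ω q) ^ ℓ) :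
    ∏ q ∈ S, (X - C (ω q)) ^ N = D * ∑ q ∈ S, ∑ ℓ ∈ L q,
      C (c q ℓ) * (X - C (ω q)) ^ (N - ℓ) * ∏ q' ∈ S.erase q, (X - C (ω q')) ^ N := by
  refine eq_of_infinite_eval_eq _ _ (hU.mono fun z hz => ?_)
  have hterm : ∀ q ∈ S, ∀ ℓ ∈ L q,
      c q ℓ * (z - ω q) ^ (N - ℓ) * ∏ q' ∈ S.erase q, (z - ω q') ^ N =
        c q ℓ / (z - ω q) ^ ℓ * ∏ q' ∈ S, (z - ω q') ^ N := by
    intro q hq ℓ hℓ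
    rw [← mul_prod_erase S (fun q' => (z - ω q') ^ N) hq,
      pow_sub₀ _ (sub_ne_zero.mpr (hUω z hz q hq)) (hL q hq ℓ hℓ)]
    ring
  change eval z _ = eval z _
  simp only [eval_prod, eval_mul, eval_pow, eval_sub, eval_X, eval_C,
    eval_finsetSum]
  rw [sum_congr rfl fun q hq => sum_congr rfl (hterm q hq)]
  simp only [← sum_mul]
  rw [← h z hz, ← mul_assoc, mul_inv_cancel₀ (hD z hz), one_mul]

theorem exists_sum_eq_add_X_sub_C_pow_mul {q₀ : ι} (hq₀ : q₀ ∈ S) :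
    ∃ G : K[X], ∑ q ∈ S, ∑ ℓ ∈ L q,
        C (c q ℓ) * (X - C (ω q)) ^ (N - ℓ) * ∏ q' ∈ S.erase q, (X - C (ω q')) ^ N =
      ∑ ℓ ∈ L q₀, C (c q₀ ℓ) * (X - C (ω q₀)) ^ (N - ℓ) * ∏ q' ∈ S.erase q₀, (X - C (ω q')) ^ N +
        (X - C (ω q₀)) ^ N * G := by
  have hdvd : (X - C (ω q₀)) ^ N ∣ ∑ q ∈ S.erase q₀, ∑ ℓ ∈ L q,
      C (c q ℓ) * (X - C (ω q)) ^ (N - ℓ) * ∏ q' ∈ S.erase q, (X - C (ω q')) ^ N :=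
    dvd_sum fun q hq => dvd_sum fun ℓ _ => dvd_mul_of_dvd_right
      (dvd_prod_of_mem _ (mem_erase.mpr ⟨fun h => (mem_erase.mp hq).1 h.symm, hq₀⟩)) _
  obtain ⟨G, hG⟩ := hdvd
  exact ⟨G, by rw [← add_sum_erase S _ hq₀, hG]⟩

end PartialFractions

theorem prod_one_sub_pow_ne_zero {𝕜 : Type*} [NormedField 𝕜] {z : 𝕜} (hz : ‖z‖ < 1) (r : ℕ) :
    ∏ i ∈ Finset.range r, (1 - z ^ (i + 1)) ≠ 0 :=
  Finset.prod_ne_zero_iff.mpr fun i _ => sub_ne_zero.mpr fun h => by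
    have : ‖z ^ (i + 1)‖ < 1 := by
      rw [norm_pow]; exact pow_lt_one₀ (norm_nonneg z) hz i.succ_ne_zero
    rw [← h, norm_one] at this
    exact lt_irrefl _ this

theorem exists_polynomial_identity_of_partialFractions {𝕜 ι : Type*} [NontriviallyNormedField 𝕜]
    [DecidableEq ι] {S : Finset ι} {ω : ι → 𝕜} {L : ι → Finset ℕ} {c : ι → ℕ → 𝕜} {N : ℕ}
    {q₀ : ι} (hq₀ : q₀ ∈ S) (hω₀ : ω q₀ = 1) (hL₀ : L q₀ = Finset.Icc 1 N)
    (hL : ∀ q ∈ S, ∀ ℓ ∈ L q, ℓ ≤ N) (hω : ∀ q ∈ S, ‖ω q‖ = 1)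
    (h : ∀ z : 𝕜, ‖z‖ < 1 → (∏ i ∈ Finset.range N, (1 - z ^ (i + 1)))⁻¹ =
      ∑ q ∈ S, ∑ ℓ ∈ L q, c q ℓ / (z - ω q) ^ ℓ) :
    ∃ G : Polynomial 𝕜,
      (Polynomial.X - 1) ^ N * ∏ q ∈ S.erase q₀, (Polynomial.X - Polynomial.C (ω q)) ^ N =
        (∏ i ∈ Finset.range N, (1 - Polynomial.X ^ (i + 1))) *
          (∑ ℓ ∈ Finset.Icc 1 N, Polynomial.C (c q₀ ℓ) * (Polynomial.X - 1) ^ (N - ℓ) *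
              ∏ q ∈ S.erase q₀, (Polynomial.X - Polynomial.C (ω q)) ^ N +
            (Polynomial.X - 1) ^ N * G) := by
  have hpoly := prod_X_sub_C_pow_eq_mul_sum (U := Metric.ball (0 : 𝕜) 1)
    (D := ∏ i ∈ Finset.range N, (1 - Polynomial.X ^ (i + 1)))
    (infinite_of_mem_nhds 0 (Metric.ball_mem_nhds 0 one_pos)) hL
    (fun z hz q hq hzq => by
      rw [mem_ball_zero_iff, hzq, hω q hq] at hz
      exact lt_irrefl _ hz)
    (fun z hz => by
      simpa [Polynomial.eval_prod] using prod_one_sub_pow_ne_zero (mem_ball_zero_iff.mp hz) N)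
    (fun z hz => by simpa [Polynomial.eval_prod] using h z (mem_ball_zero_iff.mp hz))
  obtain ⟨G, hG⟩ := exists_sum_eq_add_X_sub_C_pow_mul (L := L) (c := c) (N := N) hq₀
  rw [hG, ← Finset.mul_prod_erase S _ hq₀, hω₀, hL₀, map_one] at hpoly
  exact ⟨G, hpoly⟩

theorem eval_one_prod_X_sub_C_pow_ne_zero {K ι : Type*} [Field K] {s : Finset ι} {ω : ι → K}
    (hω : ∀ q ∈ s, ω q ≠ 1) (N : ℕ) :
    (∏ q ∈ s, (Polynomial.X - Polynomial.C (ω q)) ^ N).eval 1 ≠ 0 := by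
  simp only [Polynomial.eval_prod, Polynomial.eval_pow, Polynomial.eval_sub, Polynomial.eval_X,
    Polynomial.eval_C]
  exact Finset.prod_ne_zero_iff.mpr fun q hq => pow_ne_zero _ (sub_ne_zero.mpr (hω q hq).symm)

theorem isPrimitiveRoot_exp_two_pi_I_mul_div {h k : ℕ} (hk : k ≠ 0) (hhk : h.Coprime k) :
    IsPrimitiveRoot (Complex.exp (2 * Real.pi * Complex.I * h / k)) k := by
  rw [mul_div_assoc]
  exact Complex.isPrimitiveRoot_exp_of_coprime h k hk hhk

/-- O'Sullivan's formula for Rademacher's coefficients `c_{01m}(r)` in the partial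
fraction decomposition of `1/((1-z)(1-z²)⋯(1-z^r))`, where `ω_{hk} = e^{2πih/k}`. -/
theorem stmt15 (r : ℕ) (hr : 1 ≤ r)
    (c : ℕ → ℕ → ℕ → ℂ)
    (hc : ∀ z : ℂ, ‖z‖ < 1 →
      (∏ i ∈ Finset.range r, (1 - z ^ (i + 1)))⁻¹ =
        ∑ q ∈ (Finset.range (r + 1) ×ˢ Finset.range (r + 1)).filter
            (fun q => q.1 < q.2 ∧ Nat.gcd q.1 q.2 = 1),
          ∑ ℓ ∈ Finset.Icc 1 (r / q.2),
            c q.1 q.2 ℓ /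
              (z - Complex.exp (2 * Real.pi * Complex.I * (q.1 : ℂ) / (q.2 : ℂ))) ^ ℓ) :
    ∀ m ∈ Finset.Icc 1 r,
      c 0 1 m = ((-1 : ℂ) ^ r * ((m - 1).factorial : ℂ) / (r.factorial : ℂ)) *
        ∑ ℓ ∈ Finset.Icc m r,
          ((stirling2 ℓ m : ℂ) / ((ℓ - 1).factorial : ℂ)) *
            ∑ i ∈ Finset.Nat.antidiagonalTuple r (r - ℓ),
              ∏ k : Fin r,
                (((bernoulli (i k) : ℚ) : ℂ) / ((i k).factorial : ℂ) *
                  (((k : ℕ) + 1 : ℕ) : ℂ) ^ (i k)) := by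
  intro m hm
  obtain ⟨hm₁, hmr⟩ := Finset.mem_Icc.mp hm
  set S := (Finset.range (r + 1) ×ˢ Finset.range (r + 1)).filter
    (fun q => q.1 < q.2 ∧ Nat.gcd q.1 q.2 = 1)
  set ω : ℕ × ℕ → ℂ := fun q => Complex.exp (2 * Real.pi * Complex.I * (q.1 : ℂ) / (q.2 : ℂ))
  have hS : ∀ q ∈ S, ‖ω q‖ = 1 ∧ (ω q = 1 → q = (0, 1)) := by
    intro q hq
    obtain ⟨hlt, hcop⟩ := (Finset.mem_filter.mp hq).2
    have hprim : IsPrimitiveRoot (ω q) q.2 := isPrimitiveRoot_exp_two_pi_I_mul_div (by omega) hcop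
    refine ⟨hprim.norm'_eq_one (by omega), fun h => ?_⟩
    have hq₂ : q.2 = 1 := by rw [hprim.eq_orderOf, h, orderOf_one]
    exact Prod.ext (by omega) hq₂
  have hq₀ : ((0, 1) : ℕ × ℕ) ∈ S := by simp [S]; omega
  obtain ⟨G, hG⟩ := exists_polynomial_identity_of_partialFractions (ω := ω)
    (L := fun q => Finset.Icc 1 (r / q.2)) (c := fun q ℓ => c q.1 q.2 ℓ) hq₀ (by simp [ω])
    (by simp) (fun q _ ℓ hℓ => (Finset.mem_Icc.mp hℓ).2.trans (Nat.div_le_self _ _))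
    (fun q hq => (hS q hq).1) hc
  have hV := eval_one_prod_X_sub_C_pow_ne_zero (s := S.erase (0, 1)) (ω := ω) (fun q hq h =>
    Finset.ne_of_mem_erase hq ((hS q (Finset.mem_of_mem_erase hq)).2 h)) r
  obtain ⟨H, hH⟩ := PowerSeries.exists_bernoulliProd_eq hV hG
  obtain ⟨n, rfl⟩ := Nat.exists_eq_add_of_le' hr
  obtain ⟨k, rfl⟩ := Nat.exists_eq_add_of_le' hm₁
  have hcoeff :=
    PowerSeries.coeff_exp_mul_exp_sub_one_pow_mul (PowerSeries.bernoulliProd ℂ (n + 1)) k n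
  simp only [PowerSeries.coeff_bernoulliProd] at hcoeff
  rw [hH, mul_left_comm, PowerSeries.coeff_C_mul,
    PowerSeries.coeff_exp_mul_exp_sub_one_pow_mul_sum_add (by omega)] at hcoeff
  simp only [Nat.add_sub_cancel, stirling2_eq_stirlingSecond]
  have hsq : (-1 : ℂ) ^ (n + 1) * (-1) ^ (n + 1) = 1 := by rw [← mul_pow]; norm_num
  rw [div_mul_eq_mul_div, eq_div_iff (by exact_mod_cast (n + 1).factorial_ne_zero)]
  linear_combination (-1 : ℂ) ^ (n + 1) * hcoeff - (c 0 1 (k + 1) * (n + 1).factorial) * hsq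
end

section
/- Assume gcd(a_1, …, a_r) = 1 and let D = lcm(a_1, …, a_r). Then for every natural number n with n > D(r−1) − (a_1 + ⋯ + a_r), one has p_a(n) > 0; that is, the Frobenius number F(a_1,…,a_r) (the largest integer n with p_a(n) = 0) satisfies F(a_1,…,a_r) ≤ D(r−1) − a_1 − ⋯ − a_r. -/
lemma gcd_univ_succ (n : ℕ) (a : Fin (n + 1) → ℕ) :
    Finset.univ.gcd a = Nat.gcd (a 0) (Finset.univ.gcd (Fin.tail a)) := by
  apply Nat.dvd_antisymm
  · exact Nat.dvd_gcd (Finset.gcd_dvd (Finset.mem_univ _))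
      (Finset.dvd_gcd fun i _ => Finset.gcd_dvd (Finset.mem_univ _))
  · refine Finset.dvd_gcd fun i _ => ?_
    induction i using Fin.cases with
    | zero => exact Nat.gcd_dvd_left _ _
    | succ j => exact (Nat.gcd_dvd_right _ _).trans (Finset.gcd_dvd (Finset.mem_univ j))

lemma key : ∀ (r : ℕ) (a : Fin (r + 1) → ℕ), (∀ i, 0 < a i) →
    Finset.univ.gcd a = 1 →
    ∀ N : ℤ, ((Finset.univ.lcm a : ℕ) : ℤ) * r - ∑ i, (a i : ℤ) < N →
      ∃ x : Fin (r + 1) → ℕ, ∑ i, (a i : ℤ) * x i = N := by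
  intro r
  induction r with
  | zero =>
    intro a ha hgcd N hN
    have h0 : a 0 = 1 := by
      have := hgcd
      rw [show (Finset.univ : Finset (Fin 1)) = {0} from rfl, Finset.gcd_singleton] at this
      simpa using this
    rw [Fin.sum_univ_one, h0] at hN
    have hN0 : 0 ≤ N := by push_cast at hN; omega
    refine ⟨fun _ => N.toNat, ?_⟩
    rw [Fin.sum_univ_one, h0]
    simp [Int.toNat_of_nonneg hN0]
  | succ r ih =>
    intro a ha hgcd N hN
    set c := a 0 with hc
    set b := Fin.tail a with hbdef
    set g := Finset.univ.gcd b with hgdef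
    have hb : ∀ i, 0 < b i := fun i => ha i.succ
    have hgpos : 0 < g := by
      rcases Nat.eq_zero_or_pos g with h | h
      · exact absurd (Finset.gcd_eq_zero_iff.mp h 0 (Finset.mem_univ 0)) (hb 0).ne'
      · exact h
    have hcg : Nat.gcd c g = 1 := by rw [hgdef, hbdef, ← gcd_univ_succ]; exact hgcd
    set b' : Fin (r + 1) → ℕ := fun i => b i / g with hb'def
    have hgb : ∀ i, g ∣ b i := fun i => Finset.gcd_dvd (Finset.mem_univ i)
    have hb'mul : ∀ i, g * b' i = b i := fun i => Nat.mul_div_cancel' (hgb i)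
    have hba : ∀ i : Fin (r + 1), a i.succ = g * b' i := fun i => (hb'mul i).symm
    have hbaz : ∀ i : Fin (r + 1), (a i.succ : ℤ) = (g : ℤ) * (b' i : ℤ) := by
      intro i; exact_mod_cast congrArg (Nat.cast : ℕ → ℤ) (hba i)
    have hb' : ∀ i, 0 < b' i := fun i =>
      Nat.div_pos (Nat.le_of_dvd (hb i) (hgb i)) hgpos
    have hgcd' : Finset.univ.gcd b' = 1 :=
      Finset.gcd_div_eq_one (Finset.mem_univ 0) (hb 0).ne'
    haveI : NeZero g := ⟨hgpos.ne'⟩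
    set x0 : ℕ := ((N : ZMod g) * (c : ZMod g)⁻¹).val with hx0def
    have hx0lt : x0 < g := ZMod.val_lt _
    have hcunit : IsUnit (c : ZMod g) := (ZMod.isUnit_iff_coprime c g).mpr hcg
    have hmod : (((N - (c : ℤ) * (x0 : ℤ) : ℤ)) : ZMod g) = 0 := by
      have hcast : ((x0 : ℕ) : ZMod g) = (N : ZMod g) * (c : ZMod g)⁻¹ := by
        rw [hx0def, ZMod.natCast_val, ZMod.cast_id]
      push_cast
      rw [hcast]
      have : (c : ZMod g) * ((N : ZMod g) * (c : ZMod g)⁻¹)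
          = (N : ZMod g) * ((c : ZMod g) * (c : ZMod g)⁻¹) := by ring
      rw [this, ZMod.mul_inv_of_unit _ hcunit, mul_one, sub_self]
    obtain ⟨M, hM⟩ : (g : ℤ) ∣ N - (c : ℤ) * (x0 : ℤ) :=
      (ZMod.intCast_zmod_eq_zero_iff_dvd _ _).mp hmod
    set D := Finset.univ.lcm a with hDdef
    set L := Finset.univ.lcm b with hLdef
    set L' := Finset.univ.lcm b' with hL'def
    have hDpos : 0 < D := by
      rcases Nat.eq_zero_or_pos D with h | h
      · obtain ⟨i, -, hi⟩ := Finset.lcm_eq_zero_iff.mp h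
        exact absurd hi (ha i).ne'
      · exact h
    have hLD : L ∣ D := Finset.lcm_dvd fun i _ => by
      exact Finset.dvd_lcm (Finset.mem_univ i.succ)
    have hgL : g ∣ L := (hgb 0).trans (Finset.dvd_lcm (Finset.mem_univ 0))
    have hgL'L : g * L' ∣ L := by
      have hdiv : ∀ i, b' i ∣ L / g := by
        intro i
        obtain ⟨k, hk⟩ := Finset.dvd_lcm (f := b) (Finset.mem_univ i) (s := Finset.univ)
        refine ⟨k, ?_⟩
        rw [hLdef, hk, ← hb'mul i, mul_assoc, Nat.mul_div_cancel_left _ hgpos]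
      have hL'dvd : L' ∣ L / g := Finset.lcm_dvd fun i _ => hdiv i
      calc g * L' ∣ g * (L / g) := mul_dvd_mul_left g hL'dvd
        _ = L := Nat.mul_div_cancel' hgL
    have hgL'D : g * L' ∣ D := hgL'L.trans hLD
    have hcgD : c * g ∣ D :=
      Nat.Coprime.mul_dvd_of_dvd_of_dvd hcg
        (Finset.dvd_lcm (Finset.mem_univ 0)) (hgL.trans hLD)
    have h1 : (g : ℤ) * (L' : ℤ) ≤ (D : ℤ) := by
      exact_mod_cast Nat.le_of_dvd hDpos hgL'D
    have h2 : (c : ℤ) * (g : ℤ) ≤ (D : ℤ) := by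
      exact_mod_cast Nat.le_of_dvd hDpos hcgD
    have h3 : (x0 : ℤ) ≤ (g : ℤ) - 1 := by omega
    have hsum : (∑ i, (a i : ℤ)) = (c : ℤ) + (g : ℤ) * ∑ i, (b' i : ℤ) := by
      rw [Fin.sum_univ_succ, Finset.mul_sum]
      congr 1
      exact Finset.sum_congr rfl fun i _ => hbaz i
    have hbound : (L' : ℤ) * r - ∑ i, (b' i : ℤ) < M := by
      have hgz : (0 : ℤ) < g := by exact_mod_cast hgpos
      have hrz : (0 : ℤ) ≤ (r : ℤ) := Int.ofNat_nonneg r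
      have hcz : (0 : ℤ) ≤ (c : ℤ) := Int.ofNat_nonneg c
      have keyineq : (g : ℤ) * ((L' : ℤ) * r - ∑ i, (b' i : ℤ)) < (g : ℤ) * M := by
        have hgM : (g : ℤ) * M = N - (c : ℤ) * (x0 : ℤ) := hM.symm
        rw [hgM]
        rw [hsum] at hN
        push_cast at hN ⊢
        nlinarith [mul_le_mul_of_nonneg_right h1 hrz, mul_le_mul_of_nonneg_left h3 hcz]
      exact lt_of_mul_lt_mul_left keyineq (le_of_lt hgz)
    obtain ⟨y, hy⟩ := ih b' hb' hgcd' M hbound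
    refine ⟨Fin.cons x0 y, ?_⟩
    rw [Fin.sum_univ_succ]
    simp only [Fin.cons_zero, Fin.cons_succ]
    have hsum2 : ∑ i : Fin (r + 1), (a i.succ : ℤ) * ((y i : ℕ) : ℤ) = (g : ℤ) * M := by
      rw [← hy, Finset.mul_sum]
      exact Finset.sum_congr rfl fun i _ => by rw [hbaz i]; ring
    rw [hsum2]
    have hc0 : (a 0 : ℤ) = (c : ℤ) := rfl
    rw [hc0]
    linarith [hM]

/-- If `gcd(a_1,…,a_r) = 1` and `D = lcm(a_1,…,a_r)`, then `p_a(n) > 0` for every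
natural number `n > D(r-1) - (a_1 + ⋯ + a_r)`; i.e. the Frobenius number satisfies
`F(a_1,…,a_r) ≤ D(r-1) - a_1 - ⋯ - a_r`. -/
theorem stmt16 (r : ℕ) (hr : 1 ≤ r) (a : Fin r → ℕ) (ha : ∀ i, 0 < a i)
    (hgcd : Finset.univ.gcd a = 1)
    (D : ℕ) (hD : D = Finset.univ.lcm a) :
    ∀ n : ℕ, (D : ℤ) * ((r : ℤ) - 1) - ∑ i, (a i : ℤ) < (n : ℤ) →
      0 < restrictedPartition a n := by
  obtain ⟨s, rfl⟩ : ∃ s, r = s + 1 := ⟨r - 1, by omega⟩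
  intro n hn
  have hkey := key s a ha hgcd (n : ℤ) (by
    rw [← hD]
    push_cast at hn ⊢
    linarith)
  obtain ⟨x, hx⟩ := hkey
  have hxn : ∑ i, a i * x i = n := by
    have : ((∑ i, a i * x i : ℕ) : ℤ) = (n : ℤ) := by push_cast; exact hx
    exact_mod_cast this
  have hne : Nonempty {x : Fin (s + 1) → ℕ // ∑ i, a i * x i = n} := ⟨⟨x, hxn⟩⟩
  have hfin : Finite {x : Fin (s + 1) → ℕ // ∑ i, a i * x i = n} := by
    have hbd : ∀ (z : {x : Fin (s + 1) → ℕ // ∑ i, a i * x i = n}) (i : Fin (s + 1)),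
        z.1 i < n + 1 := by
      intro z i
      have h1 : z.1 i ≤ a i * z.1 i := Nat.le_mul_of_pos_left _ (ha i)
      have h2 : a i * z.1 i ≤ ∑ j, a j * z.1 j :=
        Finset.single_le_sum (f := fun j => a j * z.1 j)
          (fun j _ => Nat.zero_le _) (Finset.mem_univ i)
      have h3 := z.2
      omega
    exact Finite.of_injective (fun z => fun i => (⟨z.1 i, hbd z i⟩ : Fin (n + 1)))
      (fun z w h => Subtype.ext (funext fun i => congrArg Fin.val (congrFun h i)))
  exact Nat.card_pos
end

section
/- Assume r ≥ 1, the a_i are pairwise coprime (gcd(a_i, a_j) = 1 for all i ≠ j), and set D = a_1⋯a_r (= lcm(a_1,…,a_r)) and A_i = D/a_i for 1 ≤ i ≤ r, and N = D(r−1) − (A_1 + ⋯ + A_r). Then: (i) for every natural number n with n > N, there exist nonnegative integers x_1, …, x_r with A_1x_1 + ⋯ + A_rx_r = n; and (ii) if N ≥ 0 then there exist no nonnegative integers x_1, …, x_r with A_1x_1 + ⋯ + A_rx_r = N. In particular the Frobenius number satisfies F(A_1, …, A_r) = D(r−1) − A_1 − ⋯ − A_r. -/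
/-- For pairwise coprime `a_1,…,a_r` with `D = a_1⋯a_r` and `A_i = D/a_i`, every
natural number `n > N := D(r-1) - (A_1 + ⋯ + A_r)` is representable as
`A_1x_1 + ⋯ + A_rx_r` with `x_i ∈ ℕ`, while `N` itself is not (when `N ≥ 0`);
i.e. the Frobenius number satisfies `F(A_1,…,A_r) = D(r-1) - A_1 - ⋯ - A_r`. -/
theorem stmt17 (r : ℕ) (hr : 1 ≤ r) (a : Fin r → ℕ) (ha : ∀ i, 0 < a i)
    (hco : ∀ i j, i ≠ j → Nat.Coprime (a i) (a j))
    (D : ℕ) (hD : D = ∏ i, a i)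
    (A : Fin r → ℕ) (hA : ∀ i, A i = D / a i)
    (N : ℤ) (hN : N = (D : ℤ) * ((r : ℤ) - 1) - ∑ i, (A i : ℤ)) :
    (∀ n : ℕ, N < (n : ℤ) → ∃ x : Fin r → ℕ, ∑ i, A i * x i = n) ∧
    (0 ≤ N → ¬ ∃ x : Fin r → ℕ, ∑ i, (A i : ℤ) * (x i : ℤ) = N) := by
  have hD0 : 0 < D := hD ▸ Finset.prod_pos (fun i _ => ha i)
  have hdvd : ∀ i, a i ∣ D := fun i => hD ▸ Finset.dvd_prod_of_mem a (Finset.mem_univ i)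
  have hAa : ∀ i, A i * a i = D := fun i => by rw [hA i]; exact Nat.div_mul_cancel (hdvd i)
  have hAprod : ∀ i, A i = ∏ k ∈ Finset.univ.erase i, a k := by
    intro i
    have h1 : a i * ∏ k ∈ Finset.univ.erase i, a k = D := by
      rw [hD, Finset.mul_prod_erase _ _ (Finset.mem_univ i)]
    rw [hA i, ← h1, Nat.mul_div_cancel_left _ (ha i)]
  have hdvdA : ∀ i j, i ≠ j → a j ∣ A i := by
    intro i j hij
    rw [hAprod i]
    exact Finset.dvd_prod_of_mem a (Finset.mem_erase.mpr ⟨Ne.symm hij, Finset.mem_univ j⟩)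
  have hcopA : ∀ i, Nat.Coprime (A i) (a i) := by
    intro i
    rw [hAprod i]
    exact Nat.Coprime.prod_left (fun k hk => hco k i (Finset.mem_erase.mp hk).1)
  -- key identity: ∑ A i (a i - 1) = N + D
  have hsum : ∑ i, (A i : ℤ) * ((a i : ℤ) - 1) = N + D := by
    have h2 : ∀ i ∈ Finset.univ, (A i : ℤ) * ((a i : ℤ) - 1) = (D : ℤ) - A i := by
      intro i _
      have := hAa i
      have : ((A i : ℤ)) * (a i : ℤ) = (D : ℤ) := by exact_mod_cast congrArg (Nat.cast : ℕ → ℤ) this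
      linarith [this]
    rw [Finset.sum_congr rfl h2, Finset.sum_sub_distrib, Finset.sum_const, Finset.card_univ,
      Fintype.card_fin, hN, nsmul_eq_mul]
    ring
  constructor
  · -- part (i)
    intro n hn
    haveI : ∀ j : Fin r, NeZero (a j) := fun j => ⟨(ha j).ne'⟩
    set x : Fin r → ℕ := fun j => ((n : ZMod (a j)) * ((A j : ZMod (a j)))⁻¹).val with hxdef
    have hxlt : ∀ j, x j < a j := fun j => ZMod.val_lt _
    have hcong : ∀ j, (a j : ℤ) ∣ (n : ℤ) - ((A j * x j : ℕ) : ℤ) := by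
      intro j
      have h3 : ((A j * x j : ℕ) : ZMod (a j)) = ((n : ℕ) : ZMod (a j)) := by
        push_cast
        rw [hxdef]
        simp only [ZMod.natCast_val, ZMod.cast_id]
        rw [← mul_assoc, mul_comm (A j : ZMod (a j)) (n : ZMod (a j)), mul_assoc,
          ZMod.coe_mul_inv_eq_one _ (hcopA j), mul_one]
      exact ((ZMod.natCast_eq_natCast_iff _ _ _).mp h3).dvd
    set S : ℕ := ∑ i, A i * x i with hSdef
    have hdvdS : ∀ j, (a j : ℤ) ∣ (n : ℤ) - S := by
      intro j
      have h5 : (a j : ℤ) ∣ (S : ℤ) - (A j * x j : ℕ) := by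
        have : S - A j * x j = ∑ i ∈ Finset.univ.erase j, A i * x i := by
          rw [hSdef, ← Finset.add_sum_erase _ _ (Finset.mem_univ j)]
          omega
        have h6 : a j ∣ S - A j * x j := by
          rw [this]
          exact Finset.dvd_sum (fun i hi => Dvd.dvd.mul_right
            (hdvdA i j (Finset.mem_erase.mp hi).1) _)
        have h7 : A j * x j ≤ S := by
          rw [hSdef, ← Finset.add_sum_erase _ _ (Finset.mem_univ j)]
          exact Nat.le_add_right _ _
        have := Int.natCast_dvd_natCast.mpr h6
        rwa [Nat.cast_sub h7] at this
      have heq : (n : ℤ) - S = ((n : ℤ) - ((A j * x j : ℕ) : ℤ)) - ((S : ℤ) - (A j * x j : ℕ)) := by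
        ring
      rw [heq]
      exact dvd_sub (hcong j) h5
    have hDdvd : (D : ℤ) ∣ (n : ℤ) - S := by
      have hprod : (D : ℤ) = ∏ i, ((a i : ℤ)) := by rw [hD]; push_cast; rfl
      rw [hprod]
      refine Finset.prod_dvd_of_coprime ?_ (fun i _ => hdvdS i)
      intro i _ j _ hij
      exact (Nat.isCoprime_iff_coprime.mpr (hco i j hij))
    obtain ⟨k, hk⟩ := hDdvd
    have hSle : (S : ℤ) ≤ N + D := by
      rw [← hsum, hSdef]
      push_cast
      refine Finset.sum_le_sum (fun i _ => ?_)
      have : (x i : ℤ) ≤ (a i : ℤ) - 1 := by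
        have := hxlt i; omega
      exact mul_le_mul_of_nonneg_left this (by positivity)
    have hk0 : 0 ≤ k := by
      nlinarith [hk, hn, hSle, hD0]
    set m := k.toNat with hmdef
    have hmk : (m : ℤ) = k := Int.toNat_of_nonneg hk0
    set j0 : Fin r := ⟨0, hr⟩ with hj0
    refine ⟨fun i => if i = j0 then x j0 + m * a j0 else x i, ?_⟩
    have hterm : ∀ i ∈ Finset.univ, A i * (if i = j0 then x j0 + m * a j0 else x i)
        = A i * x i + (if i = j0 then D * m else 0) := by
      intro i _
      by_cases h : i = j0
      · subst h
        have h1 : A j0 * (x j0 + m * a j0) = A j0 * x j0 + D * m := by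
          rw [Nat.mul_add]; congr 1; rw [← hAa j0]; ring
        simpa using h1
      · simp [h]
    rw [Finset.sum_congr rfl hterm, Finset.sum_add_distrib, Finset.sum_ite_eq' Finset.univ j0,
      if_pos (Finset.mem_univ j0)]
    have hfin : ((S + D * m : ℕ) : ℤ) = (n : ℤ) := by
      push_cast
      rw [hmk]
      linarith [hk]
    rw [← hSdef]
    exact_mod_cast hfin
  · -- part (ii)
    intro hN0 ⟨x, hx⟩
    have hxge : ∀ j, (a j : ℤ) - 1 ≤ (x j : ℤ) := by
      intro j
      have d1 : (a j : ℤ) ∣ N + A j := by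
        have hsplit : N + A j = (D : ℤ) * ((r : ℤ) - 1) - ∑ i ∈ Finset.univ.erase j, (A i : ℤ) := by
          rw [hN, ← Finset.add_sum_erase _ _ (Finset.mem_univ j)]
          ring
        rw [hsplit]
        refine dvd_sub (Dvd.dvd.mul_right (Int.natCast_dvd_natCast.mpr (hdvd j)) _) ?_
        exact Finset.dvd_sum (fun i hi => Int.natCast_dvd_natCast.mpr
          (hdvdA i j (Finset.mem_erase.mp hi).1))
      have d2 : (a j : ℤ) ∣ N - (A j : ℤ) * x j := by
        rw [← hx, ← Finset.add_sum_erase _ _ (Finset.mem_univ j)]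
        have : (A j : ℤ) * x j + ∑ i ∈ Finset.univ.erase j, (A i : ℤ) * x i - (A j : ℤ) * x j
            = ∑ i ∈ Finset.univ.erase j, (A i : ℤ) * x i := by ring
        rw [this]
        exact Finset.dvd_sum (fun i hi => Dvd.dvd.mul_right (Int.natCast_dvd_natCast.mpr
          (hdvdA i j (Finset.mem_erase.mp hi).1)) _)
      have d3 : (a j : ℤ) ∣ (A j : ℤ) * ((x j : ℤ) + 1) := by
        have := dvd_sub d1 d2
        have heq : N + (A j : ℤ) - (N - (A j : ℤ) * x j) = (A j : ℤ) * ((x j : ℤ) + 1) := by ring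
        rwa [heq] at this
      have d4 : (a j : ℤ) ∣ (x j : ℤ) + 1 := by
        have hc : IsCoprime ((a j : ℤ)) ((A j : ℤ)) :=
          Nat.isCoprime_iff_coprime.mpr (hcopA j).symm
        exact hc.dvd_of_dvd_mul_left d3
      have := Int.le_of_dvd (by positivity) d4
      omega
    have hge : N + D ≤ N := by
      calc N + D = ∑ i, (A i : ℤ) * ((a i : ℤ) - 1) := hsum.symm
        _ ≤ ∑ i, (A i : ℤ) * (x i : ℤ) :=
            Finset.sum_le_sum (fun i _ => mul_le_mul_of_nonneg_left (hxge i) (by positivity))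
        _ = N := hx
    have : (0:ℤ) < D := by exact_mod_cast hD0
    linarith
end

section
/- Assume gcd(a_1, …, a_r) = 1 and let D = lcm(a_1, …, a_r). Then for every integer n there exist integers j_1, …, j_r with 0 ≤ j_k ≤ D/a_k − 1 for all 1 ≤ k ≤ r and a_1j_1 + ⋯ + a_rj_r ≡ n (mod D); equivalently, the map ℤ/a_1ℤ × ⋯ × ℤ/a_rℤ → ℤ/Dℤ sending (j_1 mod a_1, …, j_r mod a_r) to a_1j_1 + ⋯ + a_rj_r mod D is well defined and surjective. -/
/-- If `gcd(a_1,…,a_r) = 1` and `D = lcm(a_1,…,a_r)`, then for every integer `n` there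
exist integers `0 ≤ j_k ≤ D/a_k - 1` with `a_1j_1 + ⋯ + a_rj_r ≡ n (mod D)`;
i.e. the map `ℤ/a_1 × ⋯ × ℤ/a_r → ℤ/D`, `(j_1,…,j_r) ↦ a_1j_1 + ⋯ + a_rj_r`,
is surjective. -/
theorem stmt18 (r : ℕ) (hr : 1 ≤ r) (a : Fin r → ℕ) (ha : ∀ i, 0 < a i)
    (hgcd : Finset.univ.gcd a = 1)
    (D : ℕ) (hD : D = Finset.univ.lcm a) :
    ∀ n : ℤ, ∃ j : Fin r → ℕ, (∀ k, j k ≤ D / a k - 1) ∧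
      Int.ModEq (D : ℤ) (∑ k, (a k : ℤ) * (j k : ℤ)) n := by
  intro n
  -- Bezout: get c with ∑ c i * a i = 1
  set I : Ideal ℤ := Ideal.span (Set.range fun i => (a i : ℤ)) with hI
  obtain ⟨d, hd⟩ := (IsPrincipalIdealRing.principal I).principal
  have hdvd : ∀ i, d ∣ (a i : ℤ) := by
    intro i
    have : (a i : ℤ) ∈ I := Ideal.subset_span ⟨i, rfl⟩
    rw [hd] at this
    exact Ideal.mem_span_singleton.mp this
  have hdnat : d.natAbs ∣ 1 := by
    rw [← hgcd]
    exact Finset.dvd_gcd fun i _ => by simpa using Int.natAbs_dvd_natAbs.mpr (hdvd i)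
  have h1 : (1 : ℤ) ∈ I := by
    rw [hd]
    show (1 : ℤ) ∈ Ideal.span {d}
    rw [Ideal.mem_span_singleton, ← Int.natAbs_dvd]
    exact_mod_cast hdnat
  obtain ⟨c, hc⟩ := Ideal.mem_span_range_iff_exists_fun.mp h1
  -- D > 0 and a k ∣ D
  have hDdvd : ∀ k, a k ∣ D := fun k => hD ▸ Finset.dvd_lcm (Finset.mem_univ k)
  have hDpos : 0 < D := by
    rw [hD]
    refine Nat.pos_of_ne_zero fun h => ?_
    rw [Finset.lcm_eq_zero_iff] at h
    obtain ⟨i, -, hi⟩ := h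
    exact (ha i).ne' hi
  set m : Fin r → ℕ := fun k => D / a k with hm
  have hmpos : ∀ k, 0 < m k := fun k => Nat.div_pos (Nat.le_of_dvd hDpos (hDdvd k)) (ha k)
  have ham : ∀ k, (a k : ℤ) * (m k : ℤ) = (D : ℤ) := fun k => by
    rw [← Nat.cast_mul]
    exact_mod_cast Nat.mul_div_cancel' (hDdvd k)
  refine ⟨fun k => ((n * c k) % (m k : ℤ)).toNat, ?_, ?_⟩
  · intro k
    have hnn := Int.emod_nonneg (n * c k) (by exact_mod_cast (hmpos k).ne' : ((m k : ℤ)) ≠ 0)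
    have hlt := Int.emod_lt_of_pos (n * c k) (by exact_mod_cast hmpos k : (0:ℤ) < m k)
    have h1 : ((n * c k) % (m k : ℤ)).toNat < m k := by omega
    show ((n * c k) % (m k : ℤ)).toNat ≤ m k - 1
    omega
  · have hjcast : ∀ k, ((((n * c k) % (m k : ℤ)).toNat : ℤ)) = (n * c k) % (m k : ℤ) :=
      fun k => Int.toNat_of_nonneg (Int.emod_nonneg _ (by exact_mod_cast (hmpos k).ne'))
    have key : ∀ k, (D : ℤ) ∣ (a k : ℤ) * (n * c k) - (a k : ℤ) * (((n * c k) % (m k : ℤ)).toNat : ℤ) := by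
      intro k
      rw [← mul_sub, ← ham k]
      refine mul_dvd_mul_left _ ?_
      rw [hjcast k]
      exact Int.dvd_self_sub_of_emod_eq rfl
    have step : Int.ModEq (D : ℤ)
        (∑ k, (a k : ℤ) * (((n * c k) % (m k : ℤ)).toNat : ℤ))
        (∑ k, (a k : ℤ) * (n * c k)) := by
      rw [Int.modEq_iff_dvd, ← Finset.sum_sub_distrib]
      exact Finset.dvd_sum fun k _ => key k
    have hsum : ∑ k, (a k : ℤ) * (n * c k) = n := by
      calc ∑ k, (a k : ℤ) * (n * c k) = n * ∑ k, c k * (a k : ℤ) := by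
            rw [Finset.mul_sum]
            exact Finset.sum_congr rfl fun k _ => by ring
        _ = n := by rw [hc, mul_one]
    exact step.trans (by rw [hsum])
end
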